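/- arXiv:2409.13646 — 10 statements merged into one kernel-verified Lean document; each statement's English description precedes it below -/
import Mathlib

section
/- Let n ≥ 3 be an integer, D > 0, and let f : [0,D] → ℝ be twice continuously differentiable with f(0) = 0, f(D) = 0, f'(0) = 1, f'(D) = −1, and f(s) > 0 for all s ∈ (0,D). If for every s ∈ (0,D) one has (n−1)(n−2)·(1−f'(s)²)/f(s)² − 2(n−1)·f''(s)/f(s) ≥ 0, then |f'(s)| ≤ 1 for every s ∈ [0,D]. -/
/-!
The extrema of `f'` on `[0, D]` lie either at the endpoints, where `f' = ±1`, or at interior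
critical points of `f'`. At the latter `f'' = 0`, so nonnegative scalar curvature reduces to
`(n - 1)(n - 2)(1 - f'²) ≥ 0`, i.e. `|f'| ≤ 1` since `n ≥ 3`.
-/

open Set

/-- The scalar curvature of `ds² + f(s)² g_round` at a point, in terms of the values
`f, f', f''` of the warping function and its derivatives there. -/
noncomputable def warpedScal (n f f' f'' : ℝ) : ℝ :=
  (n - 1) * (n - 2) * (1 - f' ^ 2) / f ^ 2 - 2 * (n - 1) * f'' / f

lemma abs_le_one_of_warpedScal_nonneg {n f f' : ℝ} (hn : 2 < n) (hf : f ≠ 0)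
    (hscal : 0 ≤ warpedScal n f f' 0) : |f'| ≤ 1 := by
  simp only [warpedScal, mul_zero, zero_div, sub_zero] at hscal
  have hcoef : 0 < (n - 1) * (n - 2) := by nlinarith
  have hnum : 0 ≤ (n - 1) * (n - 2) * (1 - f' ^ 2) := by
    simpa using (le_div_iff₀ (by positivity)).mp hscal
  exact sq_le_one_iff_abs_le_one f' |>.mp (by nlinarith [nonneg_of_mul_nonneg_right hnum hcoef])

section CriticalPoints

variable {g g' : ℝ → ℝ} {a b C : ℝ}

lemma le_of_le_at_endpoints_of_le_at_critical_points (hg : ContinuousOn g (Icc a b))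
    (hderiv : ∀ x ∈ Ioo a b, HasDerivAt g (g' x) x) (ha : g a ≤ C) (hb : g b ≤ C)
    (hcrit : ∀ x ∈ Ioo a b, g' x = 0 → g x ≤ C) : ∀ x ∈ Icc a b, g x ≤ C := by
  intro x hx
  obtain ⟨c, hc, hmax⟩ := isCompact_Icc.exists_isMaxOn ⟨x, hx⟩ hg
  refine (hmax hx).trans ?_
  rcases eq_endpoints_or_mem_Ioo_of_mem_Icc hc with rfl | rfl | hc'
  · exact ha
  · exact hb
  · exact hcrit c hc' ((hmax.isLocalMax (Icc_mem_nhds hc'.1 hc'.2)).hasDerivAt_eq_zero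
      (hderiv c hc'))

lemma abs_le_of_abs_le_at_endpoints_of_abs_le_at_critical_points
    (hg : ContinuousOn g (Icc a b)) (hderiv : ∀ x ∈ Ioo a b, HasDerivAt g (g' x) x)
    (ha : |g a| ≤ C) (hb : |g b| ≤ C) (hcrit : ∀ x ∈ Ioo a b, g' x = 0 → |g x| ≤ C) :
    ∀ x ∈ Icc a b, |g x| ≤ C := by
  have upper := le_of_le_at_endpoints_of_le_at_critical_points hg hderiv
    (le_abs_self _ |>.trans ha) (le_abs_self _ |>.trans hb)
    fun x hx h0 => le_abs_self _ |>.trans (hcrit x hx h0)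
  have lower := le_of_le_at_endpoints_of_le_at_critical_points (g := fun x => -g x)
    (g' := fun x => -g' x) hg.neg (fun x hx => (hderiv x hx).neg)
    (neg_le_abs _ |>.trans ha) (neg_le_abs _ |>.trans hb)
    fun x hx h0 => neg_le_abs _ |>.trans (hcrit x hx (neg_eq_zero.mp h0))
  exact fun x hx => abs_le.mpr ⟨neg_le.mp (lower x hx), upper x hx⟩

end CriticalPoints

theorem scalar_lipschitz_general (n : ℕ) (hn : 3 ≤ n) (D : ℝ)
    (f f' f'' : ℝ → ℝ)
    (hderiv2 : ∀ s ∈ Set.Icc (0 : ℝ) D, HasDerivWithinAt f' (f'' s) (Set.Icc (0 : ℝ) D) s)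
    (hf'0 : f' 0 = 1) (hf'D : f' D = -1)
    (hpos : ∀ s ∈ Set.Ioo (0 : ℝ) D, 0 < f s)
    (hscal : ∀ s ∈ Set.Ioo (0 : ℝ) D,
      0 ≤ ((n : ℝ) - 1) * ((n : ℝ) - 2) * (1 - (f' s) ^ 2) / (f s) ^ 2
          - 2 * ((n : ℝ) - 1) * (f'' s) / (f s)) :
    ∀ s ∈ Set.Icc (0 : ℝ) D, |f' s| ≤ 1 := by
  have hn' : (2 : ℝ) < n := by exact_mod_cast hn
  refine abs_le_of_abs_le_at_endpoints_of_abs_le_at_critical_points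
    (fun s hs => (hderiv2 s hs).continuousWithinAt)
    (fun s hs => (hderiv2 s (Ioo_subset_Icc_self hs)).hasDerivAt (Icc_mem_nhds hs.1 hs.2))
    (by simp [hf'0]) (by simp [hf'D]) fun s hs hcrit => ?_
  exact abs_le_one_of_warpedScal_nonneg hn' (hpos s hs).ne' (hcrit ▸ hscal s hs)

/-- Lemma "ScalarLipschitz": nonnegative scalar curvature of a rotationally symmetric
metric `g = ds² + f(s)² g_round` forces the warping function to be 1-Lipschitz. -/
theorem scalar_lipschitz (n : ℕ) (hn : 3 ≤ n) (D : ℝ) (hD : 0 < D)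
    (f f' f'' : ℝ → ℝ)
    (hderiv1 : ∀ s ∈ Set.Icc (0 : ℝ) D, HasDerivWithinAt f (f' s) (Set.Icc (0 : ℝ) D) s)
    (hderiv2 : ∀ s ∈ Set.Icc (0 : ℝ) D, HasDerivWithinAt f' (f'' s) (Set.Icc (0 : ℝ) D) s)
    (hcont : ContinuousOn f'' (Set.Icc (0 : ℝ) D))
    (hf0 : f 0 = 0) (hfD : f D = 0) (hf'0 : f' 0 = 1) (hf'D : f' D = -1)
    (hpos : ∀ s ∈ Set.Ioo (0 : ℝ) D, 0 < f s)
    (hscal : ∀ s ∈ Set.Ioo (0 : ℝ) D,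
      0 ≤ ((n : ℝ) - 1) * ((n : ℝ) - 2) * (1 - (f' s) ^ 2) / (f s) ^ 2
          - 2 * ((n : ℝ) - 1) * (f'' s) / (f s)) :
    ∀ s ∈ Set.Icc (0 : ℝ) D, |f' s| ≤ 1 :=
  scalar_lipschitz_general n hn D f f' f'' hderiv2 hf'0 hf'D hpos hscal
end

section
/- Let n ≥ 3 be an integer, D > 0, and let f : [0,D] → ℝ be infinitely differentiable with f(0) = 0, f(D) = 0, f'(0) = 1, f'(D) = −1, all even-order derivatives of f vanishing at 0 and at D, and f(s) > 0 for all s ∈ (0,D). Suppose that for every s ∈ (0,D) one has (n−1)(n−2)·(1−f'(s)²)/f(s)² − 2(n−1)·f''(s)/f(s) ≥ n(n−1), and that sup_{s∈[0,D]} f(s) ≥ 1. Then D = π and f(s) = sin(s) for all s ∈ [0,D]. -/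
open Set Filter Real Topology

lemma wr_pos_left {g : ℝ → ℝ} {g' b : ℝ} (h : HasDerivAt g g' b)
    (hgb : g b = 0) (hneg : g' < 0) : ∀ᶠ s in 𝓝[<] b, 0 < g s := by
  have hs : Tendsto (slope g b) (𝓝[≠] b) (𝓝 g') := hasDerivAt_iff_tendsto_slope.mp h
  have hs' : Tendsto (slope g b) (𝓝[<] b) (𝓝 g') :=
    hs.mono_left (nhdsWithin_mono b fun x hx => ne_of_lt hx)
  have hev : ∀ᶠ s in 𝓝[<] b, slope g b s < 0 := hs'.eventually_lt_const hneg
  filter_upwards [hev, self_mem_nhdsWithin] with s hslope hsb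
  rw [slope_def_field, hgb, sub_zero] at hslope
  rcases div_neg_iff.mp hslope with ⟨h1, _⟩ | ⟨_, h2⟩
  · exact h1
  · linarith [mem_Iio.mp hsb]

lemma wr_neg_right {g : ℝ → ℝ} {g' b : ℝ} (h : HasDerivAt g g' b)
    (hgb : g b = 0) (hneg : g' < 0) : ∀ᶠ s in 𝓝[>] b, g s < 0 := by
  have hs : Tendsto (slope g b) (𝓝[≠] b) (𝓝 g') := hasDerivAt_iff_tendsto_slope.mp h
  have hs' : Tendsto (slope g b) (𝓝[>] b) (𝓝 g') :=
    hs.mono_left (nhdsWithin_mono b fun x hx => ne_of_gt hx)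
  have hev : ∀ᶠ s in 𝓝[>] b, slope g b s < 0 := hs'.eventually_lt_const hneg
  filter_upwards [hev, self_mem_nhdsWithin] with s hslope hsb
  rw [slope_def_field, hgb, sub_zero] at hslope
  rcases div_neg_iff.mp hslope with ⟨_, h2⟩ | ⟨h1, _⟩
  · linarith [mem_Ioi.mp hsb]
  · exact h1

lemma wr_step1 (n : ℕ) (hn : 3 ≤ n) (D : ℝ) (f f1 f2 : ℝ → ℝ)
    (hf' : ∀ s ∈ Ioo (0:ℝ) D, HasDerivAt f (f1 s) s)
    (hf1' : ∀ s ∈ Ioo (0:ℝ) D, HasDerivAt f1 (f2 s) s)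
    (hcf : ContinuousOn f (Icc 0 D)) (hcf1 : ContinuousOn f1 (Icc 0 D))
    (hf0 : f 0 = 0) (hf10 : f1 0 = 1)
    (hpos : ∀ s ∈ Ioo (0:ℝ) D, 0 < f s)
    (hA : ∀ s ∈ Ioo (0:ℝ) D, 0 ≤ ((n:ℝ)-2)*(1 - f1 s^2) - 2*f s*f2 s - (n:ℝ)*f s^2)
    (s₁ : ℝ) (hs₁ : s₁ ∈ Ioo (0:ℝ) D) (hsign : 0 ≤ f1 s₁) :
    f s₁^2 + f1 s₁^2 ≤ 1 := by
  have hn3 : (3:ℝ) ≤ (n:ℝ) := by exact_mod_cast hn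
  by_contra hcon
  push_neg at hcon
  have hs₁D : s₁ ≤ D := hs₁.2.le
  have hsub : Icc (0:ℝ) s₁ ⊆ Icc 0 D := Icc_subset_Icc le_rfl hs₁D
  set S : Set ℝ := Icc (0:ℝ) s₁ ∩ (fun s => f s^2 + f1 s^2) ⁻¹' (Iic 1) with hS
  have hScl : IsClosed S := by
    have hc : ContinuousOn (fun s => f s^2 + f1 s^2) (Icc 0 s₁) :=
      ((hcf.mono hsub).pow 2).add ((hcf1.mono hsub).pow 2)
    exact hc.preimage_isClosed_of_isClosed isClosed_Icc isClosed_Iic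
  have h0S : (0:ℝ) ∈ S := by
    refine ⟨⟨le_rfl, hs₁.1.le⟩, ?_⟩
    simp only [mem_preimage, mem_Iic, hf0, hf10]
    norm_num
  have hSne : S.Nonempty := ⟨0, h0S⟩
  have hSbdd : BddAbove S := ⟨s₁, fun x hx => hx.1.2⟩
  set α := sSup S with hα
  have hαS : α ∈ S := hScl.csSup_mem hSne hSbdd
  have hα0 : 0 ≤ α := hαS.1.1
  have hαs₁ : α ≤ s₁ := hαS.1.2
  have hα1 : f α^2 + f1 α^2 ≤ 1 := hαS.2
  have hαlt : α < s₁ := by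
    rcases lt_or_eq_of_le hαs₁ with h | h
    · exact h
    · rw [h] at hα1; linarith
  have hgt : ∀ x ∈ Ioc α s₁, 1 < f x^2 + f1 x^2 := by
    intro x hx
    by_contra hc
    push_neg at hc
    have hxS : x ∈ S := ⟨⟨hα0.trans hx.1.le, hx.2⟩, hc⟩
    exact absurd (le_csSup hSbdd hxS) (not_le.mpr hx.1)
  have hIoosub : Ioo α s₁ ⊆ Ioo 0 D := fun x hx =>
    ⟨lt_of_le_of_lt hα0 hx.1, lt_trans hx.2 hs₁.2⟩
  have hkey : ∀ x ∈ Ioo α s₁, f2 x + f x < 0 := by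
    intro x hx
    have hx' := hIoosub hx
    have hfx := hpos x hx'
    have hAx := hA x hx'
    have hhx := hgt x ⟨hx.1, hx.2.le⟩
    by_contra hcc
    push_neg at hcc
    nlinarith [mul_nonneg hfx.le hcc,
      mul_nonneg (by linarith : (0:ℝ) ≤ (n:ℝ) - 3) (by nlinarith : (0:ℝ) ≤ f x^2 + f1 x^2 - 1)]
  have hIccsub : Icc α s₁ ⊆ Icc 0 D := Icc_subset_Icc hα0 hs₁D
  have hanti1 : StrictAntiOn f1 (Icc α s₁) := by
    apply strictAntiOn_of_deriv_neg (convex_Icc α s₁) (hcf1.mono hIccsub)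
    intro x hx
    rw [interior_Icc] at hx
    rw [(hf1' x (hIoosub hx)).deriv]
    have := hkey x hx
    have := hpos x (hIoosub hx)
    linarith
  have hf1pos : ∀ x ∈ Ioo α s₁, 0 < f1 x := by
    intro x hx
    have := hanti1 ⟨hx.1.le, hx.2.le⟩ (right_mem_Icc.mpr hαs₁) hx.2
    linarith
  have hanti : StrictAntiOn (fun s => f s^2 + f1 s^2) (Icc α s₁) := by
    apply strictAntiOn_of_deriv_neg (convex_Icc α s₁)
      (((hcf.mono hIccsub).pow 2).add ((hcf1.mono hIccsub).pow 2))
    intro x hx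
    rw [interior_Icc] at hx
    have hx' := hIoosub hx
    have hd : HasDerivAt (fun s => f s^2 + f1 s^2) (2*f x*f1 x + 2*f1 x*f2 x) x := by
      have h1 := (hf' x hx').pow 2
      have h2 := (hf1' x hx').pow 2
      refine (h1.add h2).congr_deriv ?_
      push_cast
      ring
    change deriv (fun s => f s^2 + f1 s^2) x < 0
    rw [hd.deriv]
    have h3 := hf1pos x hx
    have h4 := hkey x hx
    nlinarith
  have := hanti (left_mem_Icc.mpr hαs₁) (right_mem_Icc.mpr hαs₁) hαlt
  simp only at this
  linarith

set_option maxHeartbeats 2000000 in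
lemma wr_core (n : ℕ) (hn : 3 ≤ n) (B b : ℝ) (hb : 0 < b) (hbB : b < B)
    (f f1 f2 : ℝ → ℝ)
    (hf' : ∀ s ∈ Ioo (0:ℝ) B, HasDerivAt f (f1 s) s)
    (hf1' : ∀ s ∈ Ioo (0:ℝ) B, HasDerivAt f1 (f2 s) s)
    (hcf : ContinuousOn f (Icc 0 b)) (hf0 : f 0 = 0) (hfb : f b = 1)
    (hpos : ∀ s ∈ Ioc (0:ℝ) b, 0 < f s)
    (hle : ∀ s ∈ Ioc (0:ℝ) b, f s ≤ 1)
    (hu : ∀ s ∈ Ioc (0:ℝ) b, f s^2 + f1 s^2 ≤ 1)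
    (hA : ∀ s ∈ Ioc (0:ℝ) b, 0 ≤ ((n:ℝ)-2)*(1 - f1 s^2) - 2*f s*f2 s - (n:ℝ)*f s^2) :
    b = π/2 ∧ ∀ s ∈ Icc (0:ℝ) b, f s = Real.sin s := by
  have hn3 : (3:ℝ) ≤ (n:ℝ) := by exact_mod_cast hn
  have hIocIoo : Ioc (0:ℝ) b ⊆ Ioo 0 B := fun x hx => ⟨hx.1, lt_of_le_of_lt hx.2 hbB⟩
  have hbmem : b ∈ Ioc (0:ℝ) b := ⟨hb, le_rfl⟩
  have hbIoo : b ∈ Ioo (0:ℝ) B := ⟨hb, hbB⟩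
  -- (1) f1 b = 0
  have hf1b : f1 b = 0 := by
    have h := hu b hbmem
    rw [hfb] at h
    have h0 : f1 b^2 = 0 := le_antisymm (by nlinarith) (sq_nonneg _)
    exact pow_eq_zero_iff two_ne_zero |>.mp h0
  -- (2) f2 b ≤ -1
  have hf2b : f2 b ≤ -1 := by
    have h := hA b hbmem
    rw [hfb, hf1b] at h
    nlinarith
  -- (3) G and its derivative
  set G : ℝ → ℝ := fun s => (1 - f s^2 - f1 s^2) * f s ^ (n-2) with hG
  have hn2 : n - 2 = (n - 3) + 1 := by omega
  have hGd : ∀ s ∈ Ioo (0:ℝ) B, HasDerivAt G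
      ((f s ^ (n-3)) * f1 s * (((n:ℝ)-2)*(1 - f1 s^2) - 2*f s*f2 s - (n:ℝ)*f s^2)) s := by
    intro s hs
    have h1 : HasDerivAt (fun x => 1 - f x^2 - f1 x^2)
        (0 - (2*f s^1*f1 s) - (2*f1 s^1*f2 s)) s := by
      have e1 := (hf' s hs).pow 2
      have e2 := (hf1' s hs).pow 2
      exact ((hasDerivAt_const s (1:ℝ)).sub e1).sub e2
    have h2 : HasDerivAt (fun x => f x ^ (n-2)) ((n-2 : ℕ) * f s ^ (n-3) * f1 s) s := by
      have h := (hf' s hs).pow (n-2)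
      have hnn : n - 2 - 1 = n - 3 := by omega
      rw [hnn] at h
      exact h
    have h3 := h1.mul h2
    refine h3.congr_deriv ?_
    have hcast : ((n - 2 : ℕ) : ℝ) = (n:ℝ) - 2 := by
      push_cast [Nat.cast_sub (by omega : 2 ≤ n)]
      ring
    have hpow : f s ^ (n-2) = f s ^ (n-3) * f s := by rw [hn2, pow_succ]
    rw [hcast, hpow]
    ring
  have hGnn : ∀ s ∈ Ioc (0:ℝ) b, 0 ≤ G s := by
    intro s hs
    exact mul_nonneg (by nlinarith [hu s hs]) (pow_nonneg (hpos s hs).le _)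
  have hGb : G b = 0 := by
    show (1 - f b^2 - f1 b^2) * f b ^ (n-2) = 0
    rw [hfb, hf1b]
    norm_num
  -- (5) monotonicity tool
  have hGmono : ∀ a c : ℝ, 0 < a → c ≤ b → a ≤ c →
      (∀ x ∈ Ioo a c, 0 < f1 x) → MonotoneOn G (Icc a c) := by
    intro a c ha hcb hac hf1p
    have hIccsub : Icc a c ⊆ Ioo 0 B := fun x hx =>
      ⟨lt_of_lt_of_le ha hx.1, lt_of_le_of_lt (hx.2.trans hcb) hbB⟩
    apply monotoneOn_of_deriv_nonneg (convex_Icc a c)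
    · exact fun x hx => ((hGd x (hIccsub hx)).continuousAt).continuousWithinAt
    · intro x hx
      rw [interior_Icc] at hx
      exact ((hGd x (hIccsub (Ioo_subset_Icc_self hx))).differentiableAt).differentiableWithinAt
    · intro x hx
      rw [interior_Icc] at hx
      have hx' : x ∈ Ioc (0:ℝ) b := ⟨lt_trans ha hx.1, (hx.2.le).trans hcb⟩
      rw [(hGd x (hIccsub (Ioo_subset_Icc_self hx))).deriv]
      exact mul_nonneg (mul_nonneg (pow_nonneg (hpos x hx').le _) (hf1p x hx).le) (hA x hx')
  -- (6) f1 > 0 near b on the left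
  have hnear : ∀ᶠ s in 𝓝[<] b, 0 < f1 s :=
    wr_pos_left (hf1' b hbIoo) hf1b (by linarith)
  obtain ⟨a₀, ha₀b, ha₀⟩ := mem_nhdsLT_iff_exists_Ioo_subset.mp hnear
  set a₁ : ℝ := max a₀ (b/2) with ha₁def
  have ha₁pos : 0 < a₁ := lt_of_lt_of_le (by linarith) (le_max_right _ _)
  have ha₁b : a₁ < b := max_lt (mem_Iio.mp ha₀b) (by linarith)
  have ha₁sub : Ioo a₁ b ⊆ Ioo a₀ b := Ioo_subset_Ioo (le_max_left _ _) le_rfl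
  have hseed : ∀ s ∈ Icc a₁ b, G s = 0 := by
    have hm := hGmono a₁ b ha₁pos le_rfl ha₁b.le (fun x hx => ha₀ (ha₁sub hx))
    intro s hs
    have h1 : G s ≤ G b := hm hs (right_mem_Icc.mpr ha₁b.le) hs.2
    have h2 : 0 ≤ G s := hGnn s ⟨lt_of_lt_of_le ha₁pos hs.1, hs.2⟩
    rw [hGb] at h1
    linarith
  -- (7) T and τ
  set T : Set ℝ := {t | t ∈ Ioc (0:ℝ) b ∧ ∀ s ∈ Icc t b, G s = 0} with hT
  have ha₁T : a₁ ∈ T := ⟨⟨ha₁pos, ha₁b.le⟩, hseed⟩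
  have hTne : T.Nonempty := ⟨a₁, ha₁T⟩
  have hTbdd : BddBelow T := ⟨0, fun x hx => hx.1.1.le⟩
  set τ := sInf T with hτ
  have hτnn : 0 ≤ τ := le_csInf hTne fun x hx => hx.1.1.le
  have hτb : τ < b := lt_of_le_of_lt (csInf_le hTbdd ha₁T) ha₁b
  have hGzero : ∀ s, τ < s → s ≤ b → G s = 0 := by
    intro s h1 h2
    obtain ⟨t, htT, hts⟩ := exists_lt_of_csInf_lt hTne h1
    exact htT.2 s ⟨hts.le, h2⟩
  -- (SC1) no interior point with f = 1 on a zone where u ≡ 0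
  have SC1 : ∀ t₀, 0 < t₀ → t₀ ≤ b → (∀ s ∈ Icc t₀ b, f s^2 + f1 s^2 = 1) →
      ∀ z ∈ Ico t₀ b, f z ≠ 1 := by
    intro t₀ ht₀ ht₀b huz z hz hz1
    have hzIoc : z ∈ Ioc (0:ℝ) b := ⟨lt_of_lt_of_le ht₀ hz.1, hz.2.le⟩
    have hzIoo : z ∈ Ioo (0:ℝ) B := hIocIoo hzIoc
    have hf1z : f1 z = 0 := by
      have h := huz z ⟨hz.1, hz.2.le⟩
      rw [hz1] at h
      have h0 : f1 z^2 = 0 := by nlinarith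
      exact pow_eq_zero_iff two_ne_zero |>.mp h0
    have hf2z : f2 z ≤ -1 := by
      have h := hA z hzIoc
      rw [hz1, hf1z] at h
      nlinarith
    have hev : ∀ᶠ s in 𝓝[>] z, f1 s < 0 :=
      wr_neg_right (hf1' z hzIoo) hf1z (by linarith)
    obtain ⟨w', hw', hw'sub⟩ := mem_nhdsGT_iff_exists_Ioo_subset.mp hev
    set w₁ : ℝ := min w' b with hw₁def
    have hzw₁ : z < w₁ := lt_min (mem_Ioi.mp hw') hz.2
    set p : ℝ := (z + w₁)/2 with hpdef
    have hzp : z < p := by simp only [hpdef]; linarith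
    have hpw₁ : p < w₁ := by simp only [hpdef]; linarith
    have hpb : p < b := lt_of_lt_of_le hpw₁ (min_le_right _ _)
    have hneg_on : ∀ x ∈ Ioc z p, f1 x < 0 := fun x hx =>
      hw'sub ⟨hx.1, lt_of_lt_of_le (lt_of_le_of_lt hx.2 hpw₁) (min_le_left _ _)⟩
    -- f strictly decreasing on [z, p]
    have hfanti : StrictAntiOn f (Icc z p) := by
      apply strictAntiOn_of_deriv_neg (convex_Icc z p)
      · intro x hx
        have hx' : x ∈ Ioo (0:ℝ) B :=
          ⟨lt_of_lt_of_le hzIoc.1 hx.1, lt_of_le_of_lt (hx.2.trans hpb.le) (lt_of_le_of_lt (le_refl b) hbB)⟩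
        exact ((hf' x hx').continuousAt).continuousWithinAt
      · intro x hx
        rw [interior_Icc] at hx
        have hx' : x ∈ Ioo (0:ℝ) B := ⟨lt_trans hzIoc.1 hx.1, by
          have := hx.2.trans hpb
          linarith⟩
        rw [(hf' x hx').deriv]
        exact hneg_on x ⟨hx.1, hx.2.le⟩
    have hfp : f p < 1 := by
      have := hfanti (left_mem_Icc.mpr hzp.le) (right_mem_Icc.mpr hzp.le) hzp
      rw [hz1] at this
      exact this
    -- z' : first return of f to 1 after p
    set E : Set ℝ := Icc p b ∩ f ⁻¹' {1} with hE
    have hEcl : IsClosed E := by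
      have hc : ContinuousOn f (Icc p b) := hcf.mono (Icc_subset_Icc (by linarith [hzIoc.1, hzp]) le_rfl)
      exact hc.preimage_isClosed_of_isClosed isClosed_Icc isClosed_singleton
    have hEne : E.Nonempty := ⟨b, ⟨⟨hpb.le, le_rfl⟩, by simp [hfb]⟩⟩
    have hEbdd : BddBelow E := ⟨p, fun x hx => hx.1.1⟩
    set z' := sInf E with hz'
    have hz'E : z' ∈ E := hEcl.csInf_mem hEne hEbdd
    have hz'p : p ≤ z' := hz'E.1.1
    have hz'b : z' ≤ b := hz'E.1.2
    have hfz' : f z' = 1 := hz'E.2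
    have hz'pstrict : p < z' := by
      rcases lt_or_eq_of_le hz'p with h | h
      · exact h
      · exfalso; rw [h, hfz'] at hfp; linarith
    have hfless : ∀ s ∈ Ioo z z', f s < 1 := by
      intro s hs
      rcases le_or_gt s p with h | h
      · have := hfanti (left_mem_Icc.mpr hzp.le) ⟨hs.1.le, h⟩ hs.1
        rw [hz1] at this
        exact this
      · have hsIoc : s ∈ Ioc (0:ℝ) b := ⟨lt_trans hzIoc.1 hs.1, (hs.2.le).trans hz'b⟩
        rcases lt_or_eq_of_le (hle s hsIoc) with h1 | h1
        · exact h1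
        · exfalso
          have : s ∈ E := ⟨⟨h.le, hsIoc.2⟩, h1⟩
          exact absurd (csInf_le hEbdd this) (not_le.mpr hs.2)
    have hf1ne : ∀ s ∈ Ioo z z', f1 s ≠ 0 := by
      intro s hs hzero
      have hsIcc : s ∈ Icc t₀ b := ⟨hz.1.trans hs.1.le, (hs.2.le).trans hz'b⟩
      have h := huz s hsIcc
      rw [hzero] at h
      have hfs := hpos s ⟨lt_of_lt_of_le ht₀ hsIcc.1, hsIcc.2⟩
      have hfs1 := hfless s hs
      nlinarith
    have hf1neg : ∀ s ∈ Ioo z z', f1 s < 0 := by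
      intro s hs
      rcases lt_or_gt_of_ne (hf1ne s hs) with h | h
      · exact h
      · exfalso
        set q : ℝ := (z + min p s)/2 with hq
        have hzq : z < q := by
          have : z < min p s := lt_min hzp hs.1
          simp only [hq]; linarith
        have hqp : q < p := by
          have h1 : min p s ≤ p := min_le_left _ _
          have : z < min p s := lt_min hzp hs.1
          simp only [hq]; linarith
        have hqs : q < s := by
          have h1 : min p s ≤ s := min_le_right _ _
          have : z < min p s := lt_min hzp hs.1
          simp only [hq]; linarith
        have hq1 : f1 q < 0 := hneg_on q ⟨hzq, hqp.le⟩
        have hcont : ContinuousOn f1 (Icc q s) := by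
          intro x hx
          have hx' : x ∈ Ioo (0:ℝ) B := ⟨lt_trans hzIoc.1 (lt_of_lt_of_le hzq hx.1),
            lt_of_le_of_lt ((hx.2.trans hs.2.le).trans hz'b) hbB⟩
          exact ((hf1' x hx').continuousAt).continuousWithinAt
        have : (0:ℝ) ∈ Icc (f1 q) (f1 s) := ⟨hq1.le, h.le⟩
        obtain ⟨r, hr, hr0⟩ := intermediate_value_Icc hqs.le hcont this
        have hrIoo : r ∈ Ioo z z' := ⟨lt_trans hzq (lt_of_lt_of_le (lt_of_le_of_ne hr.1 ?eq1) le_rfl), lt_of_le_of_lt hr.2 hs.2⟩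
        · exact hf1ne r hrIoo hr0
        case eq1 =>
          intro heq
          rw [← heq] at hr0
          exact absurd hr0 (ne_of_lt hq1)
    -- now f strictly decreasing on [z, z'], contradiction with f z' = 1 = f z
    have hfanti2 : StrictAntiOn f (Icc z z') := by
      apply strictAntiOn_of_deriv_neg (convex_Icc z z')
      · intro x hx
        have hx' : x ∈ Ioo (0:ℝ) B := ⟨lt_of_lt_of_le hzIoc.1 hx.1,
          lt_of_le_of_lt (hx.2.trans hz'b) hbB⟩
        exact ((hf' x hx').continuousAt).continuousWithinAt
      · intro x hx
        rw [interior_Icc] at hx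
        have hx' : x ∈ Ioo (0:ℝ) B := ⟨lt_trans hzIoc.1 hx.1,
          lt_of_le_of_lt (hx.2.le.trans hz'b) hbB⟩
        rw [(hf' x hx').deriv]
        exact hf1neg x hx
    have := hfanti2 (left_mem_Icc.mpr (hzp.le.trans hz'p)) (right_mem_Icc.mpr (hzp.le.trans hz'p)) (lt_trans hzp hz'pstrict)
    rw [hz1, hfz'] at this
    linarith
  -- (PO) f1 > 0 on a zone where u ≡ 0
  have PO : ∀ t₀, 0 < t₀ → t₀ ≤ b → (∀ s ∈ Icc t₀ b, f s^2 + f1 s^2 = 1) →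
      ∀ z ∈ Ico t₀ b, 0 < f1 z := by
    intro t₀ ht₀ ht₀b huz z hz
    have hzIoc : z ∈ Ioc (0:ℝ) b := ⟨lt_of_lt_of_le ht₀ hz.1, hz.2.le⟩
    have hfz1 : f z < 1 := lt_of_le_of_ne (hle z hzIoc) (SC1 t₀ ht₀ ht₀b huz z hz)
    have hfzpos := hpos z hzIoc
    have hf1zne : f1 z ≠ 0 := by
      intro h0
      have h := huz z ⟨hz.1, hz.2.le⟩
      rw [h0] at h
      nlinarith
    rcases lt_or_gt_of_ne hf1zne with h | h
    · exfalso
      -- pick y near b with f1 y > 0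
      set y : ℝ := (max a₀ z + b)/2 with hy
      have h1 : max a₀ z < b := max_lt (mem_Iio.mp ha₀b) hz.2
      have hyb : y < b := by simp only [hy]; linarith
      have hya : a₀ < y := by
        have := le_max_left a₀ z
        simp only [hy]; linarith
      have hyz : z < y := by
        have := le_max_right a₀ z
        simp only [hy]; linarith
      have hy1 : 0 < f1 y := ha₀ ⟨hya, hyb⟩
      have hcont : ContinuousOn f1 (Icc z y) := by
        intro x hx
        have hx' : x ∈ Ioo (0:ℝ) B := ⟨lt_of_lt_of_le hzIoc.1 hx.1,
          lt_of_le_of_lt (hx.2.trans hyb.le) hbB⟩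
        exact ((hf1' x hx').continuousAt).continuousWithinAt
      have h0mem : (0:ℝ) ∈ Icc (f1 z) (f1 y) := ⟨h.le, hy1.le⟩
      obtain ⟨r, hr, hr0⟩ := intermediate_value_Icc hyz.le hcont h0mem
      have hrIco : r ∈ Ico t₀ b := ⟨hz.1.trans hr.1, lt_of_le_of_lt hr.2 hyb⟩
      have hfr : f r = 1 := by
        have h := huz r ⟨hrIco.1, hrIco.2.le⟩
        rw [hr0] at h
        have hfrpos := hpos r ⟨lt_of_lt_of_le ht₀ hrIco.1, hrIco.2.le⟩
        nlinarith
      exact SC1 t₀ ht₀ ht₀b huz r hrIco hfr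
    · exact h
  -- (8) τ = 0
  have hτ0 : τ = 0 := by
    by_contra hτne
    have hτpos : 0 < τ := lt_of_le_of_ne hτnn (Ne.symm hτne)
    have hτIoo : τ ∈ Ioo (0:ℝ) B := ⟨hτpos, lt_trans hτb hbB⟩
    have hGτ : G τ = 0 := by
      have hc : ContinuousAt G τ := (hGd τ hτIoo).continuousAt
      have h1 : Tendsto G (𝓝[>] τ) (𝓝 (G τ)) := hc.continuousWithinAt.tendsto
      have h2 : Tendsto G (𝓝[>] τ) (𝓝 0) := by
        apply Tendsto.congr' _ tendsto_const_nhds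
        filter_upwards [Ioo_mem_nhdsGT_of_mem ⟨le_rfl, hτb⟩] with x hx
        exact (hGzero x hx.1 hx.2.le).symm
      exact tendsto_nhds_unique h1 h2
    have huz : ∀ s ∈ Icc τ b, f s^2 + f1 s^2 = 1 := by
      intro s hs
      have hGs : G s = 0 := by
        rcases lt_or_eq_of_le hs.1 with h | h
        · exact hGzero s h hs.2
        · rw [← h]; exact hGτ
      have hfs : 0 < f s := hpos s ⟨lt_of_lt_of_le hτpos hs.1, hs.2⟩
      have hne : f s ^ (n-2) ≠ 0 := pow_ne_zero _ (ne_of_gt hfs)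
      have := mul_eq_zero.mp hGs
      rcases this with h | h
      · linarith
      · exact absurd h hne
    have hf1τ : 0 < f1 τ := PO τ hτpos hτb.le huz τ ⟨le_rfl, hτb⟩
    have hcont1 : ContinuousAt f1 τ := (hf1' τ hτIoo).continuousAt
    have hev2 : ∀ᶠ x in 𝓝 τ, 0 < f1 x := hcont1.eventually (eventually_gt_nhds hf1τ)
    obtain ⟨ε, hε, hball⟩ := Metric.eventually_nhds_iff.mp hev2
    set a₂ : ℝ := max (τ - ε/2) (τ/2) with ha₂
    have ha₂pos : 0 < a₂ := lt_of_lt_of_le (by linarith) (le_max_right _ _)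
    have ha₂τ : a₂ < τ := max_lt (by linarith) (by linarith)
    have hf1p : ∀ x ∈ Ioo a₂ τ, 0 < f1 x := by
      intro x hx
      apply hball
      have h1 : τ - ε/2 ≤ a₂ := le_max_left _ _
      have : |x - τ| < ε := by
        rw [abs_lt]
        constructor <;> [linarith [hx.1]; linarith [hx.2]]
      exact this
    have hm := hGmono a₂ τ ha₂pos hτb.le ha₂τ.le hf1p
    have hzero2 : ∀ s ∈ Icc a₂ b, G s = 0 := by
      intro s hs
      rcases le_or_gt s τ with h | h
      · have h1 : G s ≤ G τ := hm ⟨hs.1, h⟩ (right_mem_Icc.mpr ha₂τ.le) h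
        have h2 : 0 ≤ G s := hGnn s ⟨lt_of_lt_of_le ha₂pos hs.1, hs.2⟩
        rw [hGτ] at h1
        linarith
      · exact hGzero s h hs.2
    have ha₂T : a₂ ∈ T := ⟨⟨ha₂pos, ha₂τ.le.trans hτb.le⟩, hzero2⟩
    exact absurd (csInf_le hTbdd ha₂T) (not_le.mpr ha₂τ)
  -- (9) consequences on (0, b)
  have huz2 : ∀ s ∈ Ioc (0:ℝ) b, f s^2 + f1 s^2 = 1 := by
    intro s hs
    have hGs : G s = 0 := hGzero s (hτ0 ▸ hs.1) hs.2
    have hfs := hpos s hs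
    have hne : f s ^ (n-2) ≠ 0 := pow_ne_zero _ (ne_of_gt hfs)
    rcases mul_eq_zero.mp hGs with h | h
    · linarith
    · exact absurd h hne
  have hf1pos : ∀ s ∈ Ioo (0:ℝ) b, 0 < f1 s := by
    intro s hs
    exact PO s hs.1 hs.2.le (fun x hx => huz2 x ⟨lt_of_lt_of_le hs.1 hx.1, hx.2⟩)
      s ⟨le_rfl, hs.2⟩
  have hflt1 : ∀ s ∈ Ioo (0:ℝ) b, f s < 1 := by
    intro s hs
    exact lt_of_le_of_ne (hle s ⟨hs.1, hs.2.le⟩)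
      (SC1 s hs.1 hs.2.le (fun x hx => huz2 x ⟨lt_of_lt_of_le hs.1 hx.1, hx.2⟩) s ⟨le_rfl, hs.2⟩)
  -- (10) arcsin finale
  have hsqrt : ∀ s ∈ Ioo (0:ℝ) b, Real.sqrt (1 - f s^2) = f1 s := by
    intro s hs
    have h := huz2 s ⟨hs.1, hs.2.le⟩
    have h2 : 1 - f s^2 = f1 s^2 := by linarith
    rw [h2]
    exact Real.sqrt_sq (hf1pos s hs).le
  set F : ℝ → ℝ := fun s => Real.arcsin (f s) - s with hF
  have hFd : ∀ s ∈ Ioo (0:ℝ) b, HasDerivAt F 0 s := by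
    intro s hs
    have hs' : s ∈ Ioo (0:ℝ) B := ⟨hs.1, lt_trans hs.2 hbB⟩
    have hfs := hpos s ⟨hs.1, hs.2.le⟩
    have h1 : f s ≠ -1 := by linarith
    have h2 : f s ≠ 1 := ne_of_lt (hflt1 s hs)
    have ha := (Real.hasDerivAt_arcsin h1 h2).comp s (hf' s hs')
    have hd := ha.sub (hasDerivAt_id s)
    have hf1s := hf1pos s hs
    have hsq := hsqrt s hs
    have hval : 1 / Real.sqrt (1 - f s ^ 2) * f1 s - 1 = 0 := by
      rw [hsq]
      field_simp
      norm_num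
    rw [hval] at hd
    exact hd
  have hFcont : ContinuousOn F (Icc 0 b) :=
    (Real.continuous_arcsin.comp_continuousOn hcf).sub continuousOn_id
  have hF0 : F 0 = 0 := by
    show Real.arcsin (f 0) - 0 = 0
    rw [hf0, Real.arcsin_zero]
    ring
  have hFb : F b = π/2 - b := by
    show Real.arcsin (f b) - b = π/2 - b
    rw [hfb, Real.arcsin_one]
  obtain ⟨c, _, hc⟩ := exists_hasDerivAt_eq_slope F (fun _ => 0) hb hFcont
    (fun x hx => hFd x hx)
  have hbπ : b = π/2 := by
    have h := hc.symm
    rw [hF0, hFb] at h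
    have hbne : b - 0 ≠ 0 := by linarith
    field_simp at h
    linarith
  refine ⟨hbπ, ?_⟩
  intro s hs
  rcases eq_or_lt_of_le hs.1 with h0 | h0
  · rw [← h0, hf0, Real.sin_zero]
  rcases eq_or_lt_of_le hs.2 with hb' | hb'
  · rw [hb', hfb, hbπ, Real.sin_pi_div_two]
  have hsIoo : s ∈ Ioo (0:ℝ) b := ⟨h0, hb'⟩
  obtain ⟨c', _, hc'⟩ := exists_hasDerivAt_eq_slope F (fun _ => 0) h0
    (hFcont.mono (Icc_subset_Icc le_rfl hs.2)) (fun x hx => hFd x ⟨hx.1, lt_trans hx.2 hb'⟩)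
  have hFs : F s = 0 := by
    have h := hc'.symm
    rw [hF0] at h
    have : s - 0 ≠ 0 := by linarith
    field_simp at h
    linarith
  have harcsin : Real.arcsin (f s) = s := by
    have : Real.arcsin (f s) - s = 0 := hFs
    linarith
  have := Real.sin_arcsin (by linarith [hpos s ⟨h0, hb'.le⟩] : (-1:ℝ) ≤ f s)
    (hle s ⟨h0, hb'.le⟩)
  rw [harcsin] at this
  exact this.symm

set_option maxHeartbeats 1000000 in
/-- Width rigidity theorem in rotational symmetry: a smooth rotationally symmetric
metric `g = ds² + f(s)² g_round` on the `n`-sphere with `Scal ≥ n(n-1)` and width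
`W_g ≥ ω_{n-1}` (i.e. `max f ≥ 1`) is the unit round metric, i.e. `f = sin` and `D = π`. -/
theorem width_rigidity (n : ℕ) (hn : 3 ≤ n) (D : ℝ) (hD : 0 < D) (f : ℝ → ℝ)
    (hsmooth : ContDiffOn ℝ (⊤ : ℕ∞) f (Set.Icc (0 : ℝ) D))
    (hf0 : f 0 = 0) (hfD : f D = 0)
    (hf'0 : iteratedDerivWithin 1 f (Set.Icc (0 : ℝ) D) 0 = 1)
    (hf'D : iteratedDerivWithin 1 f (Set.Icc (0 : ℝ) D) D = -1)
    (heven0 : ∀ k : ℕ, Even k → iteratedDerivWithin k f (Set.Icc (0 : ℝ) D) 0 = 0)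
    (hevenD : ∀ k : ℕ, Even k → iteratedDerivWithin k f (Set.Icc (0 : ℝ) D) D = 0)
    (hpos : ∀ s ∈ Set.Ioo (0 : ℝ) D, 0 < f s)
    (hscal : ∀ s ∈ Set.Ioo (0 : ℝ) D,
      (n : ℝ) * ((n : ℝ) - 1) ≤
        ((n : ℝ) - 1) * ((n : ℝ) - 2)
            * (1 - (iteratedDerivWithin 1 f (Set.Icc (0 : ℝ) D) s) ^ 2) / (f s) ^ 2
          - 2 * ((n : ℝ) - 1) * (iteratedDerivWithin 2 f (Set.Icc (0 : ℝ) D) s) / (f s))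
    (hsup : 1 ≤ sSup (f '' Set.Icc (0 : ℝ) D)) :
    D = Real.pi ∧ ∀ s ∈ Set.Icc (0 : ℝ) D, f s = Real.sin s := by
  have hn3 : (3:ℝ) ≤ (n:ℝ) := by exact_mod_cast hn
  set f1 : ℝ → ℝ := fun s => iteratedDerivWithin 1 f (Set.Icc (0:ℝ) D) s with hf1def
  set f2 : ℝ → ℝ := fun s => iteratedDerivWithin 2 f (Set.Icc (0:ℝ) D) s with hf2def
  have hud : UniqueDiffOn ℝ (Icc (0:ℝ) D) := uniqueDiffOn_Icc hD
  have hf1eq : ∀ s ∈ Icc (0:ℝ) D, f1 s = derivWithin f (Icc (0:ℝ) D) s := fun s hs =>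
    congrFun iteratedDerivWithin_one s
  have hder : DifferentiableOn ℝ f (Icc (0:ℝ) D) := hsmooth.differentiableOn (by simp)
  have hg : ContDiffOn ℝ (⊤ : ℕ∞) (derivWithin f (Icc (0:ℝ) D)) (Icc (0:ℝ) D) :=
    hsmooth.derivWithin hud (by simp)
  have hcf : ContinuousOn f (Icc (0:ℝ) D) := hsmooth.continuousOn
  have hcf1 : ContinuousOn f1 (Icc (0:ℝ) D) :=
    hg.continuousOn.congr fun s hs => hf1eq s hs
  have hf' : ∀ s ∈ Ioo (0:ℝ) D, HasDerivAt f (f1 s) s := by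
    intro s hs
    have hsI : s ∈ Icc (0:ℝ) D := Ioo_subset_Icc_self hs
    have hnb : Icc (0:ℝ) D ∈ 𝓝 s := Icc_mem_nhds hs.1 hs.2
    have h := (hder s hsI).hasDerivWithinAt
    rw [← hf1eq s hsI] at h
    exact h.hasDerivAt hnb
  have hf1' : ∀ s ∈ Ioo (0:ℝ) D, HasDerivAt f1 (f2 s) s := by
    intro s hs
    have hsI : s ∈ Icc (0:ℝ) D := Ioo_subset_Icc_self hs
    have hnb : Icc (0:ℝ) D ∈ 𝓝 s := Icc_mem_nhds hs.1 hs.2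
    have hdg : DifferentiableOn ℝ (derivWithin f (Icc (0:ℝ) D)) (Icc (0:ℝ) D) :=
      hg.differentiableOn (by simp)
    have h2 : f2 s = derivWithin (derivWithin f (Icc (0:ℝ) D)) (Icc (0:ℝ) D) s := by
      have e1 : iteratedDerivWithin 2 f (Icc (0:ℝ) D) s
          = derivWithin (iteratedDerivWithin 1 f (Icc (0:ℝ) D)) (Icc (0:ℝ) D) s :=
        congrFun iteratedDerivWithin_succ s
      rw [hf2def]
      simp only
      rw [e1]
      exact derivWithin_congr (fun y hy => congrFun iteratedDerivWithin_one y)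
        (congrFun iteratedDerivWithin_one s)
    have h := ((hdg s hsI).hasDerivWithinAt).hasDerivAt hnb
    rw [← h2] at h
    apply h.congr_of_eventuallyEq
    filter_upwards [hnb] with y hy
    exact hf1eq y hy
  have hA : ∀ s ∈ Ioo (0:ℝ) D, 0 ≤ ((n:ℝ)-2)*(1 - f1 s^2) - 2*f s*f2 s - (n:ℝ)*f s^2 := by
    intro s hs
    have hfs := hpos s hs
    have h := hscal s hs
    have hsq : (0:ℝ) < f s^2 := by positivity
    have hne : f s ≠ 0 := ne_of_gt hfs
    have h2 : (n:ℝ)*((n:ℝ)-1)*f s^2 ≤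
        ((n:ℝ)-1)*((n:ℝ)-2)*(1 - f1 s^2) - 2*((n:ℝ)-1)*f2 s*f s := by
      have h3 := mul_le_mul_of_nonneg_right h hsq.le
      have h4 : (((n:ℝ) - 1) * ((n:ℝ) - 2) * (1 - f1 s ^ 2) / f s ^ 2
            - 2 * ((n:ℝ) - 1) * f2 s / f s) * f s ^ 2
          = ((n:ℝ)-1)*((n:ℝ)-2)*(1 - f1 s^2) - 2*((n:ℝ)-1)*f2 s*f s := by
        field_simp
      rw [h4] at h3
      exact h3
    have hn1 : (0:ℝ) < (n:ℝ)-1 := by linarith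
    by_contra hq
    push_neg at hq
    have hq2 := mul_pos hn1 (neg_pos.mpr hq)
    nlinarith [h2]
  -- reflection data
  set g : ℝ → ℝ := fun s => f (D - s) with hgdef
  set g1 : ℝ → ℝ := fun s => -f1 (D - s) with hg1def
  set g2 : ℝ → ℝ := fun s => f2 (D - s) with hg2def
  have hrefl : ∀ s ∈ Ioo (0:ℝ) D, D - s ∈ Ioo (0:ℝ) D := fun s hs =>
    ⟨by linarith [hs.2], by linarith [hs.1]⟩
  have hlin : ∀ s : ℝ, HasDerivAt (fun x : ℝ => D - x) (-1) s := by
    intro s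
    exact ((hasDerivAt_const s D).sub (hasDerivAt_id s)).congr_deriv (by norm_num)
  have hgd : ∀ s ∈ Ioo (0:ℝ) D, HasDerivAt g (g1 s) s := by
    intro s hs
    have h := (hf' (D - s) (hrefl s hs)).comp s (hlin s)
    simp only [Function.comp_def] at h
    exact h.congr_deriv (by simp [hg1def])
  have hg1d : ∀ s ∈ Ioo (0:ℝ) D, HasDerivAt g1 (g2 s) s := by
    intro s hs
    have h := ((hf1' (D - s) (hrefl s hs)).comp s (hlin s)).neg
    simp only [Function.comp_def] at h
    exact h.congr_deriv (by simp [hg2def])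
  have hreflIcc : MapsTo (fun x : ℝ => D - x) (Icc (0:ℝ) D) (Icc (0:ℝ) D) := by
    intro x hx
    simp only [mem_Icc] at *
    constructor <;> linarith [hx.1, hx.2]
  have hgc : ContinuousOn g (Icc (0:ℝ) D) :=
    hcf.comp ((continuous_const.sub continuous_id).continuousOn) hreflIcc
  have hgc1 : ContinuousOn g1 (Icc (0:ℝ) D) :=
    (hcf1.comp ((continuous_const.sub continuous_id).continuousOn) hreflIcc).neg
  have hg0 : g 0 = 0 := by simp [hgdef, hfD]
  have hg10 : g1 0 = 1 := by simp [hg1def, hf1def, hf'D, -iteratedDerivWithin_one]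
  have hgpos : ∀ s ∈ Ioo (0:ℝ) D, 0 < g s := fun s hs => hpos _ (hrefl s hs)
  have hgA : ∀ s ∈ Ioo (0:ℝ) D, 0 ≤ ((n:ℝ)-2)*(1 - g1 s^2) - 2*g s*g2 s - (n:ℝ)*g s^2 := by
    intro s hs
    have h := hA (D - s) (hrefl s hs)
    calc (0:ℝ) ≤ ((n:ℝ)-2)*(1 - f1 (D-s)^2) - 2*f (D-s)*f2 (D-s) - (n:ℝ)*f (D-s)^2 := h
    _ = ((n:ℝ)-2)*(1 - g1 s^2) - 2*g s*g2 s - (n:ℝ)*g s^2 := by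
        simp only [hgdef, hg1def, hg2def]
        ring
  -- h ≤ 1 everywhere in the interior
  have hU : ∀ s ∈ Ioo (0:ℝ) D, f s^2 + f1 s^2 ≤ 1 := by
    intro s hs
    rcases le_or_gt 0 (f1 s) with h | h
    · exact wr_step1 n hn D f f1 f2 hf' hf1' hcf hcf1 hf0
        (by rw [hf1def]; exact hf'0) hpos hA s hs h
    · have hrs := hrefl s hs
      have h1 := wr_step1 n hn D g g1 g2 hgd hg1d hgc hgc1 hg0 hg10 hgpos hgA
        (D - s) hrs (by simp [hg1def, sub_sub_cancel]; linarith)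
      have e1 : g (D - s) = f s := by simp [hgdef, sub_sub_cancel]
      have e2 : g1 (D - s)^2 = f1 s^2 := by simp [hg1def, sub_sub_cancel]
      rw [e1, e2] at h1
      exact h1
  -- maximum point
  obtain ⟨b, hbI, hbmax⟩ := isCompact_Icc.exists_isMaxOn (nonempty_Icc.mpr hD.le) hcf
  have himg : sSup (f '' Icc (0:ℝ) D) ≤ f b := by
    apply csSup_le ((nonempty_Icc.mpr hD.le).image f)
    rintro y ⟨x, hx, rfl⟩
    exact hbmax hx
  have hfb1 : 1 ≤ f b := le_trans hsup himg
  have hbIoo : b ∈ Ioo (0:ℝ) D := by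
    constructor
    · rcases eq_or_lt_of_le hbI.1 with h | h
      · exfalso; rw [← h, hf0] at hfb1; linarith
      · exact h
    · rcases eq_or_lt_of_le hbI.2 with h | h
      · exfalso; rw [h, hfD] at hfb1; linarith
      · exact h
  have hfble : f b ≤ 1 := by nlinarith [hU b hbIoo, sq_nonneg (f1 b)]
  have hfbeq : f b = 1 := le_antisymm hfble hfb1
  -- apply core on the left
  have hIocsub : Ioc (0:ℝ) b ⊆ Ioo (0:ℝ) D := fun x hx =>
    ⟨hx.1, lt_of_le_of_lt hx.2 hbIoo.2⟩
  have hle' : ∀ s ∈ Ioo (0:ℝ) D, f s ≤ 1 := by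
    intro s hs
    nlinarith [hU s hs, sq_nonneg (f1 s), hpos s hs]
  obtain ⟨hbhalf, hsinL⟩ := wr_core n hn D b hbIoo.1 hbIoo.2 f f1 f2 hf' hf1'
    (hcf.mono (Icc_subset_Icc le_rfl hbIoo.2.le)) hf0 hfbeq
    (fun s hs => hpos s (hIocsub hs)) (fun s hs => hle' s (hIocsub hs))
    (fun s hs => hU s (hIocsub hs)) (fun s hs => hA s (hIocsub hs))
  -- apply core on the right (reflected)
  have hb' : 0 < D - b := by linarith [hbIoo.2]
  have hb'B : D - b < D := by linarith [hbIoo.1]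
  have hgb' : g (D - b) = 1 := by
    have : g (D - b) = f b := by simp [hgdef, sub_sub_cancel]
    rw [this, hfbeq]
  have hIocsub' : Ioc (0:ℝ) (D - b) ⊆ Ioo (0:ℝ) D := fun x hx =>
    ⟨hx.1, lt_of_le_of_lt hx.2 hb'B⟩
  have hgU : ∀ s ∈ Ioc (0:ℝ) (D - b), g s^2 + g1 s^2 ≤ 1 := by
    intro s hs
    have h := hU (D - s) (hrefl s (hIocsub' hs))
    calc g s^2 + g1 s^2 = f (D - s)^2 + f1 (D - s)^2 := by
          simp only [hgdef, hg1def]; ring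
    _ ≤ 1 := h
  obtain ⟨hbhalf', hsinR⟩ := wr_core n hn D (D - b) hb' hb'B g g1 g2 hgd hg1d
    (hgc.mono (Icc_subset_Icc le_rfl hb'B.le)) hg0 hgb'
    (fun s hs => hgpos s (hIocsub' hs))
    (fun s hs => by
      have := hle' (D - s) (hrefl s (hIocsub' hs))
      simpa [hgdef] using this)
    hgU
    (fun s hs => hgA s (hIocsub' hs))
  have hDpi : D = π := by
    have hpi : π = π/2 + π/2 := by ring
    rw [hpi]
    linarith [hbhalf, hbhalf']
  refine ⟨hDpi, ?_⟩
  intro s hs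
  rcases le_or_gt s b with h | h
  · exact hsinL s ⟨hs.1, h⟩
  · have h1 : D - s ∈ Icc (0:ℝ) (D - b) := ⟨by linarith [hs.2], by linarith⟩
    have h2 := hsinR (D - s) h1
    have h3 : g (D - s) = f s := by simp [hgdef, sub_sub_cancel]
    rw [h3] at h2
    rw [h2, hDpi]
    exact Real.sin_pi_sub s
end

section
/- Let n ≥ 3 be an integer, m > 0, and let f : [0,m] → ℝ be infinitely differentiable with f(0) = 0, f'(0) = 1, all even-order derivatives of f vanishing at 0, and f(s) > 0 for all s ∈ (0,m]. Suppose f'(m) = 0, f(m) ≥ 1, and for every s ∈ (0,m] one has (n−1)(n−2)·(1−f'(s)²)/f(s)² − 2(n−1)·f''(s)/f(s) ≥ n(n−1). Then m = π/2 and f(s) = sin(s) for all s ∈ [0,m]. -/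
set_option maxHeartbeats 1000000

open Set Real Filter Topology

/-- Hemispherical rigidity step: a smooth rotationally symmetric metric on the
`n`-hemisphere with `Scal ≥ n(n-1)` and totally geodesic boundary sphere of radius
`f(m) ≥ 1` is the round hemisphere: `m = π/2` and `f = sin`. -/
theorem hemisphere_rigidity (n : ℕ) (hn : 3 ≤ n) (m : ℝ) (hm : 0 < m) (f : ℝ → ℝ)
    (hsmooth : ContDiffOn ℝ (⊤ : ℕ∞) f (Set.Icc (0 : ℝ) m))
    (hf0 : f 0 = 0)
    (hf'0 : iteratedDerivWithin 1 f (Set.Icc (0 : ℝ) m) 0 = 1)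
    (heven0 : ∀ k : ℕ, Even k → iteratedDerivWithin k f (Set.Icc (0 : ℝ) m) 0 = 0)
    (hpos : ∀ s ∈ Set.Ioc (0 : ℝ) m, 0 < f s)
    (hf'm : iteratedDerivWithin 1 f (Set.Icc (0 : ℝ) m) m = 0)
    (hfm : 1 ≤ f m)
    (hscal : ∀ s ∈ Set.Ioc (0 : ℝ) m,
      (n : ℝ) * ((n : ℝ) - 1) ≤
        ((n : ℝ) - 1) * ((n : ℝ) - 2)
            * (1 - (iteratedDerivWithin 1 f (Set.Icc (0 : ℝ) m) s) ^ 2) / (f s) ^ 2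
          - 2 * ((n : ℝ) - 1) * (iteratedDerivWithin 2 f (Set.Icc (0 : ℝ) m) s) / (f s)) :
    m = Real.pi / 2 ∧ ∀ s ∈ Set.Icc (0 : ℝ) m, f s = Real.sin s := by
  obtain ⟨k, rfl⟩ : ∃ k, n = k + 3 := ⟨n - 3, by omega⟩
  have huniq : UniqueDiffOn ℝ (Set.Icc (0:ℝ) m) := uniqueDiffOn_Icc hm
  set g : ℝ → ℝ := derivWithin f (Set.Icc (0:ℝ) m) with hgdef
  set g2 : ℝ → ℝ := derivWithin g (Set.Icc (0:ℝ) m) with hg2def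
  have hone : ∀ x ∈ Set.Icc (0:ℝ) m, iteratedDerivWithin 1 f (Set.Icc (0:ℝ) m) x = g x :=
    fun x hx => congrFun iteratedDerivWithin_one x
  have htwo : ∀ x ∈ Set.Icc (0:ℝ) m, iteratedDerivWithin 2 f (Set.Icc (0:ℝ) m) x = g2 x := by
    intro x hx
    rw [show (2:ℕ) = 1 + 1 from rfl, iteratedDerivWithin_succ]
    exact derivWithin_congr (fun y hy => hone y hy) (hone x hx)
  have h0mem : (0:ℝ) ∈ Set.Icc (0:ℝ) m := ⟨le_rfl, hm.le⟩
  have hmmem : m ∈ Set.Icc (0:ℝ) m := ⟨hm.le, le_rfl⟩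
  have hg0 : g 0 = 1 := by rw [← hone 0 h0mem]; exact hf'0
  have hgm : g m = 0 := by rw [← hone m hmmem]; exact hf'm
  have hfc : ContinuousOn f (Set.Icc (0:ℝ) m) := hsmooth.continuousOn
  have hf2 : ContDiffOn ℝ 2 f (Set.Icc (0:ℝ) m) := hsmooth.of_le (by exact WithTop.coe_le_coe.mpr (le_top : (2:ℕ∞) ≤ ⊤))
  have hg1 : ContDiffOn ℝ 1 g (Set.Icc (0:ℝ) m) := hf2.derivWithin huniq (by norm_num)
  have hgc : ContinuousOn g (Set.Icc (0:ℝ) m) := hg1.continuousOn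
  have hfdiff : ∀ x ∈ Set.Icc (0:ℝ) m, HasDerivWithinAt f (g x) (Set.Icc (0:ℝ) m) x :=
    fun x hx => ((hsmooth.differentiableOn (by simp)) x hx).hasDerivWithinAt
  have hgdiff : ∀ x ∈ Set.Icc (0:ℝ) m, HasDerivWithinAt g (g2 x) (Set.Icc (0:ℝ) m) x :=
    fun x hx => ((hg1.differentiableOn one_ne_zero) x hx).hasDerivWithinAt
  have hfD : ∀ x ∈ Set.Ioo (0:ℝ) m, HasDerivAt f (g x) x := fun x hx =>
    (hfdiff x (Ioo_subset_Icc_self hx)).hasDerivAt (Icc_mem_nhds hx.1 hx.2)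
  have hgD : ∀ x ∈ Set.Ioo (0:ℝ) m, HasDerivAt g (g2 x) x := fun x hx =>
    (hgdiff x (Ioo_subset_Icc_self hx)).hasDerivAt (Icc_mem_nhds hx.1 hx.2)
  -- the key pointwise differential inequality
  have key : ∀ s ∈ Set.Ioc (0:ℝ) m,
      2 * f s * g2 s ≤ ((k:ℝ)+1) * (1 - g s ^ 2) - ((k:ℝ)+3) * f s ^ 2 := by
    intro s hs
    have hsI : s ∈ Set.Icc (0:ℝ) m := Ioc_subset_Icc_self hs
    have hf : 0 < f s := hpos s hs
    have h := hscal s hs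
    rw [hone s hsI, htwo s hsI] at h
    push_cast at h
    rw [div_sub_div _ _ (by positivity) hf.ne', le_div_iff₀ (by positivity)] at h
    have hc : (0:ℝ) < ((k:ℝ)+2) * f s := by positivity
    have h3 : ((k:ℝ)+2) * f s * (2 * f s * g2 s) ≤
        ((k:ℝ)+2) * f s * (((k:ℝ)+1) * (1 - g s ^ 2) - ((k:ℝ)+3) * f s ^ 2) := by nlinarith [h]
    exact le_of_mul_le_mul_left h3 hc
  -- the monotone quantity
  set r : ℝ → ℝ := fun s => f s ^ (k+1) * (g s ^ 2 + f s ^ 2 - 1) with hrdef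
  have hrc : ContinuousOn r (Set.Icc (0:ℝ) m) :=
    (hfc.pow (k+1)).mul (((hgc.pow 2).add (hfc.pow 2)).sub continuousOn_const)
  have hrD : ∀ x ∈ Set.Ioo (0:ℝ) m, HasDerivAt r
      (((k:ℝ)+1) * f x ^ k * g x * (g x ^ 2 + f x ^ 2 - 1)
        + f x ^ (k+1) * (2 * g x * g2 x + 2 * f x * g x)) x := by
    intro x hx
    have h1 : HasDerivAt (fun s => f s ^ (k+1)) (((k:ℝ)+1) * f x ^ k * g x) x := by
      simpa using (hfD x hx).fun_pow (k+1)
    have h2 : HasDerivAt (fun s => g s ^ 2 + f s ^ 2 - 1)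
        (2 * g x * g2 x + 2 * f x * g x) x := by
      simpa [pow_one] using (((hgD x hx).pow 2).add ((hfD x hx).pow 2)).sub_const 1
    simpa [hrdef] using h1.fun_mul h2
  have hanti : ∀ a, 0 ≤ a → (∀ s ∈ Set.Ioo a m, 0 ≤ g s) → AntitoneOn r (Set.Icc a m) := by
    intro a ha hge
    have hsub : Set.Icc a m ⊆ Set.Icc (0:ℝ) m := Set.Icc_subset_Icc ha le_rfl
    apply antitoneOn_of_deriv_nonpos (convex_Icc a m) (hrc.mono hsub)
    · intro x hx
      rw [interior_Icc] at hx
      have hx' : x ∈ Set.Ioo (0:ℝ) m := ⟨lt_of_le_of_lt ha hx.1, hx.2⟩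
      exact (hrD x hx').differentiableAt.differentiableWithinAt
    · intro x hx
      rw [interior_Icc] at hx
      have hx' : x ∈ Set.Ioo (0:ℝ) m := ⟨lt_of_le_of_lt ha hx.1, hx.2⟩
      rw [(hrD x hx').deriv]
      have hfx : 0 < f x := hpos x ⟨hx'.1, hx'.2.le⟩
      have hkey := key x ⟨hx'.1, hx'.2.le⟩
      have hgx : 0 ≤ g x := hge x hx
      have hb : ((k:ℝ)+1) * (g x ^ 2 + f x ^ 2 - 1) + 2 * f x * g2 x + 2 * f x ^ 2 ≤ 0 := by
        nlinarith [hkey]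
      have hfac : ((k:ℝ)+1) * f x ^ k * g x * (g x ^ 2 + f x ^ 2 - 1)
          + f x ^ (k+1) * (2 * g x * g2 x + 2 * f x * g x)
          = (f x ^ k * g x) * (((k:ℝ)+1) * (g x ^ 2 + f x ^ 2 - 1)
              + 2 * f x * g2 x + 2 * f x ^ 2) := by ring
      rw [hfac]
      exact mul_nonpos_of_nonneg_of_nonpos (mul_nonneg (pow_nonneg hfx.le k) hgx) hb
  have hrm : 0 ≤ r m := by
    have h1 : (0:ℝ) ≤ g m ^ 2 + f m ^ 2 - 1 := by nlinarith [hfm]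
    exact mul_nonneg (pow_nonneg (by linarith : (0:ℝ) ≤ f m) _) h1
  have hr0 : r 0 = 0 := by simp [hrdef, hf0, zero_pow (Nat.succ_ne_zero k)]
  -- slope lemma at points where g vanishes and f = 1
  have hslope : ∀ z ∈ Set.Ioc (0:ℝ) m, g z = 0 → f z = 1 →
      ∃ δ > 0, ∀ s ∈ Set.Icc (0:ℝ) m, s ≠ z → |s - z| < δ →
        ((s < z → 0 < g s) ∧ (z < s → g s < 0)) := by
    intro z hz hgz hfz
    have hg2z : g2 z < 0 := by
      have hk := key z hz
      rw [hfz, hgz] at hk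
      nlinarith [hk]
    have hd : HasDerivWithinAt g (g2 z) (Set.Icc (0:ℝ) m) z := hgdiff z (Ioc_subset_Icc_self hz)
    rw [hasDerivWithinAt_iff_tendsto_slope] at hd
    have hev : ∀ᶠ s in 𝓝[Set.Icc (0:ℝ) m \ {z}] z, slope g z s < 0 :=
      Filter.Tendsto.eventually_lt_const hg2z hd
    rw [Filter.eventually_iff, Metric.mem_nhdsWithin_iff] at hev
    obtain ⟨δ, hδ, hball⟩ := hev
    refine ⟨δ, hδ, fun s hsI hsne hdist => ?_⟩
    have hmem : s ∈ Metric.ball z δ ∩ (Set.Icc (0:ℝ) m \ {z}) :=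
      ⟨Metric.mem_ball.mpr (by rwa [Real.dist_eq]), ⟨hsI, hsne⟩⟩
    have hs : slope g z s < 0 := hball hmem
    rw [slope_def_field, hgz, sub_zero] at hs
    constructor <;> intro hlt <;> rcases div_neg_iff.mp hs with ⟨h1, h2⟩ | ⟨h1, h2⟩ <;> linarith
  -- no point of (0,m) has g < 0
  have hnoneg : ∀ c ∈ Set.Ioo (0:ℝ) m, ¬ g c < 0 := by
    intro c hc hneg
    set S : Set ℝ := {s | s ∈ Set.Icc c m ∧ g s < 0} with hSdef
    have hcS : c ∈ S := ⟨⟨le_rfl, hc.2.le⟩, hneg⟩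
    have hSne : S.Nonempty := ⟨c, hcS⟩
    have hSbdd : BddAbove S := ⟨m, fun s hs => hs.1.2⟩
    set z : ℝ := sSup S with hzdef
    have hcz : c ≤ z := le_csSup hSbdd hcS
    have hzm : z ≤ m := csSup_le hSne (fun s hs => hs.1.2)
    have hz0 : 0 < z := lt_of_lt_of_le hc.1 hcz
    have hzI : z ∈ Set.Icc (0:ℝ) m := ⟨hz0.le, hzm⟩
    have hub : ∀ s ∈ S, s ≤ z := fun s hs => le_csSup hSbdd hs
    -- g is nonnegative strictly to the right of z
    have hright : ∀ s, z < s → s ≤ m → 0 ≤ g s := by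
      intro s hzs hsm
      by_contra hlt
      exact absurd (hub s ⟨⟨le_trans hcz hzs.le, hsm⟩, lt_of_not_ge hlt⟩) (not_le.mpr hzs)
    -- g z = 0
    have hgz : g z = 0 := by
      rcases eq_or_lt_of_le hzm with hzm' | hzm'
      · rw [hzm']; exact hgm
      · -- z < m : right continuity forces g z ≥ 0; approximation from S forces g z ≤ 0
        have hge : 0 ≤ g z := by
          by_contra hlt
          push_neg at hlt
          have hcont : ContinuousWithinAt g (Set.Icc (0:ℝ) m) z := hgc z hzI
          have hev : ∀ᶠ s in 𝓝[Set.Icc (0:ℝ) m] z, g s < 0 :=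
            Filter.Tendsto.eventually_lt_const hlt hcont
          rw [Filter.eventually_iff, Metric.mem_nhdsWithin_iff] at hev
          obtain ⟨δ, hδ, hball⟩ := hev
          set s : ℝ := min (z + δ/2) ((z + m)/2) with hsdef
          have hzs : z < s := by
            apply lt_min <;> [linarith; linarith]
          have hsm : s ≤ m := by
            have : (z + m)/2 ≤ m := by linarith
            exact le_trans (min_le_right _ _) this
          have hdist : dist s z < δ := by
            rw [Real.dist_eq, abs_lt]
            constructor
            · have := min_le_left (z + δ/2) ((z + m)/2); linarith [min_le_left (z + δ/2) ((z + m)/2)]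
            · have h1 : s ≤ z + δ/2 := min_le_left _ _
              linarith
          have : g s < 0 := hball ⟨Metric.mem_ball.mpr hdist, ⟨le_trans hz0.le hzs.le, hsm⟩⟩
          exact absurd (hright s hzs hsm) (not_le.mpr this)
        by_contra hne
        have hgt : 0 < g z := lt_of_le_of_ne hge (Ne.symm hne)
        have hcont : ContinuousWithinAt g (Set.Icc (0:ℝ) m) z := hgc z hzI
        have hev : ∀ᶠ s in 𝓝[Set.Icc (0:ℝ) m] z, 0 < g s :=
          Filter.Tendsto.eventually_const_lt hgt hcont
        rw [Filter.eventually_iff, Metric.mem_nhdsWithin_iff] at hev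
        obtain ⟨δ, hδ, hball⟩ := hev
        obtain ⟨s, hsS, hs_gt⟩ := exists_lt_of_lt_csSup hSne (show z - δ < z by linarith)
        have hsz : s ≤ z := hub s hsS
        have hdist : dist s z < δ := by rw [Real.dist_eq, abs_lt]; constructor <;> linarith
        have : 0 < g s := hball ⟨Metric.mem_ball.mpr hdist, ⟨le_trans hc.1.le hsS.1.1, hsS.1.2⟩⟩
        linarith [hsS.2]
    have hznS : z ∉ S := fun h => absurd h.2 (by rw [hgz]; exact lt_irrefl 0)
    rcases lt_trichotomy (f z) 1 with hfz | hfz | hfz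
    · -- f z < 1 : the monotone quantity gives a contradiction
      have hzltm : z < m := by
        rcases eq_or_lt_of_le hzm with h | h
        · exfalso; rw [h] at hfz; linarith
        · exact h
      have hA : AntitoneOn r (Set.Icc z m) :=
        hanti z hz0.le (fun s hs => hright s hs.1 hs.2.le)
      have hle : r m ≤ r z := hA ⟨le_rfl, hzm⟩ ⟨hzm, le_rfl⟩ hzm
      have hfzpos : 0 < f z := hpos z ⟨hz0, hzm⟩
      have hrz : r z < 0 := by
        have h1 : g z ^ 2 + f z ^ 2 - 1 < 0 := by rw [hgz]; nlinarith
        exact mul_neg_of_pos_of_neg (pow_pos hfzpos _) h1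
      linarith [hrm]
    · -- f z = 1 : slope argument to the left contradicts points of S near z
      obtain ⟨δ, hδ, hball⟩ := hslope z ⟨hz0, hzm⟩ hgz hfz
      obtain ⟨s, hsS, hs_gt⟩ := exists_lt_of_lt_csSup hSne (show z - δ < z by linarith)
      have hsz : s ≤ z := hub s hsS
      have hsne : s ≠ z := fun h => hznS (h ▸ hsS)
      have hslt : s < z := lt_of_le_of_ne hsz hsne
      have hdist : |s - z| < δ := by rw [abs_lt]; constructor <;> linarith
      have := (hball s ⟨le_trans hc.1.le hsS.1.1, hsS.1.2⟩ hsne hdist).1 hslt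
      linarith [hsS.2]
    · -- f z > 1 : g is strictly decreasing near z on the left, contradiction
      have hcont : ContinuousWithinAt f (Set.Icc (0:ℝ) m) z := hfc z hzI
      have hev : ∀ᶠ s in 𝓝[Set.Icc (0:ℝ) m] z, 1 < f s := Filter.Tendsto.eventually_const_lt hfz hcont
      rw [Filter.eventually_iff, Metric.mem_nhdsWithin_iff] at hev
      obtain ⟨δ, hδ, hball⟩ := hev
      set a : ℝ := max (z - δ/2) (z/2) with hadef
      have haz : a < z := by
        apply max_lt <;> linarith
      have ha0 : 0 < a := lt_of_lt_of_le (by linarith : (0:ℝ) < z/2) (le_max_right _ _)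
      have haI : Set.Icc a z ⊆ Set.Icc (0:ℝ) m := Set.Icc_subset_Icc ha0.le hzm
      have hfgt : ∀ x ∈ Set.Icc a z, 1 < f x := by
        intro x hx
        apply hball
        refine ⟨?_, haI hx⟩
        rw [Metric.mem_ball, Real.dist_eq, abs_lt]
        have h1 : z - δ/2 ≤ a := le_max_left _ _
        constructor <;> [linarith [hx.1]; linarith [hx.2]]
      have hanti_g : StrictAntiOn g (Set.Icc a z) := by
        apply strictAntiOn_of_deriv_neg (convex_Icc a z) (hgc.mono haI)
        intro x hx
        rw [interior_Icc] at hx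
        have hxI : x ∈ Set.Ioo (0:ℝ) m := ⟨lt_trans ha0 hx.1, lt_of_lt_of_le hx.2 hzm⟩
        rw [(hgD x hxI).deriv]
        have hfx : 1 < f x := hfgt x ⟨hx.1.le, hx.2.le⟩
        have hfx0 : 0 < f x := by linarith
        have hk := key x ⟨hxI.1, hxI.2.le⟩
        nlinarith [mul_nonneg (by positivity : (0:ℝ) ≤ (k:ℝ)+1) (sq_nonneg (g x)),
          (show (1:ℝ) < f x ^ 2 by nlinarith), (Nat.cast_nonneg k : (0:ℝ) ≤ (k:ℝ)), hfx0.le]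
      obtain ⟨s, hsS, hs_gt⟩ := exists_lt_of_lt_csSup hSne haz
      have hsz : s ≤ z := hub s hsS
      have hsne : s ≠ z := fun h => hznS (h ▸ hsS)
      have hslt : s < z := lt_of_le_of_ne hsz hsne
      have := hanti_g ⟨hs_gt.le, hsz⟩ ⟨haz.le, le_rfl⟩ hslt
      rw [hgz] at this
      linarith [hsS.2]
  have hgnn : ∀ s ∈ Set.Ioo (0:ℝ) m, 0 ≤ g s := fun s hs => le_of_not_gt (hnoneg s hs)
  have hr_anti : AntitoneOn r (Set.Icc (0:ℝ) m) := hanti 0 le_rfl hgnn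
  have hrle : ∀ s ∈ Set.Icc (0:ℝ) m, r s ≤ 0 := by
    intro s hs
    have := hr_anti h0mem hs hs.1
    rw [hr0] at this; exact this
  -- g is strictly positive on the open interval
  have hgpos : ∀ s ∈ Set.Ioo (0:ℝ) m, 0 < g s := by
    intro c hc
    rcases lt_or_eq_of_le (hgnn c hc) with h | h
    · exact h
    · exfalso
      have hgc0 : g c = 0 := h.symm
      have hfc0 : 0 < f c := hpos c ⟨hc.1, hc.2.le⟩
      have hrc0 : r c ≤ 0 := hrle c ⟨hc.1.le, hc.2.le⟩
      have hfle : f c ≤ 1 := by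
        by_contra hgt
        push_neg at hgt
        have : 0 < r c := by
          have : 0 < g c ^ 2 + f c ^ 2 - 1 := by rw [hgc0]; nlinarith
          exact mul_pos (pow_pos hfc0 _) this
        linarith
      rcases lt_or_eq_of_le hfle with hflt | hfeq
      · have hrcneg : r c < 0 := by
          have h1 : g c ^ 2 + f c ^ 2 - 1 < 0 := by rw [hgc0]; nlinarith
          exact mul_neg_of_pos_of_neg (pow_pos hfc0 _) h1
        have := hr_anti ⟨hc.1.le, hc.2.le⟩ hmmem hc.2.le
        linarith [hrm]
      · obtain ⟨δ, hδ, hball⟩ := hslope c ⟨hc.1, hc.2.le⟩ hgc0 hfeq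
        set s : ℝ := min (c + δ/2) ((c + m)/2) with hsdef
        have hcs : c < s := by apply lt_min <;> [linarith; linarith [hc.2]]
        have hsm : s < m := lt_of_le_of_lt (min_le_right _ _) (by linarith [hc.2])
        have hdist : |s - c| < δ := by
          rw [abs_lt]
          have h1 : s ≤ c + δ/2 := min_le_left _ _
          constructor <;> linarith
        have := (hball s ⟨le_trans hc.1.le hcs.le, hsm.le⟩ (ne_of_gt hcs) hdist).2 hcs
        linarith [hgnn s ⟨lt_trans hc.1 hcs, hsm⟩]
  -- rigidity: r vanishes identically, so g^2 + f^2 = 1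
  have hrm0 : r m = 0 := le_antisymm (hrle m hmmem) hrm
  have hsq : ∀ s ∈ Set.Icc (0:ℝ) m, g s ^ 2 + f s ^ 2 = 1 := by
    intro s hs
    rcases eq_or_lt_of_le hs.1 with h0 | h0
    · rw [← h0, hg0, hf0]; norm_num
    · have hfs : 0 < f s := hpos s ⟨h0, hs.2⟩
      have h1 : r s ≤ 0 := hrle s hs
      have h2 : 0 ≤ r s := by
        have := hr_anti hs hmmem hs.2
        rw [hrm0] at this; linarith
      have h3 : r s = 0 := le_antisymm h1 h2
      have h4 : f s ^ (k+1) ≠ 0 := (pow_pos hfs _).ne'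
      have := mul_eq_zero.mp h3
      rcases this with h | h
      · exact absurd h h4
      · linarith
  have hfle1 : ∀ s ∈ Set.Icc (0:ℝ) m, f s ≤ 1 := by
    intro s hs
    rcases eq_or_lt_of_le hs.1 with h0 | h0
    · rw [← h0, hf0]; norm_num
    · have hfs : 0 < f s := hpos s ⟨h0, hs.2⟩
      nlinarith [hsq s hs, sq_nonneg (g s)]
  have hfge0 : ∀ s ∈ Set.Icc (0:ℝ) m, 0 ≤ f s := by
    intro s hs
    rcases eq_or_lt_of_le hs.1 with h0 | h0
    · rw [← h0, hf0]
    · exact (hpos s ⟨h0, hs.2⟩).le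
  have hflt1 : ∀ s ∈ Set.Ico (0:ℝ) m, f s < 1 := by
    intro s hs
    rcases eq_or_lt_of_le hs.1 with h0 | h0
    · rw [← h0, hf0]; norm_num
    · have hg := hgpos s ⟨h0, hs.2⟩
      nlinarith [hsq s ⟨hs.1, hs.2.le⟩]
  have hgpos' : ∀ s ∈ Set.Ico (0:ℝ) m, 0 < g s := by
    intro s hs
    rcases eq_or_lt_of_le hs.1 with h0 | h0
    · rw [← h0, hg0]; norm_num
    · exact hgpos s ⟨h0, hs.2⟩
  -- integrate: arcsin ∘ f has derivative 1
  have htheta : ∀ x ∈ Set.Icc (0:ℝ) m, Real.arcsin (f x) - x = 0 := by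
    have hcont : ContinuousOn (fun x => Real.arcsin (f x) - x) (Set.Icc (0:ℝ) m) :=
      (Real.continuous_arcsin.comp_continuousOn hfc).sub continuousOn_id
    have hderiv : ∀ x ∈ Set.Ico (0:ℝ) m,
        HasDerivWithinAt (fun x => Real.arcsin (f x) - x) 0 (Set.Ici x) x := by
      intro x hx
      have hxI : x ∈ Set.Icc (0:ℝ) m := ⟨hx.1, hx.2.le⟩
      have hfd : HasDerivWithinAt f (g x) (Set.Ici x) x :=
        (hfdiff x hxI).mono_of_mem_nhdsWithin (Icc_mem_nhdsGE_of_mem ⟨hx.1, hx.2⟩)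
      have hflt := hflt1 x hx
      have hfge := hfge0 x hxI
      have harc : HasDerivAt Real.arcsin (1 / Real.sqrt (1 - f x ^ 2)) (f x) :=
        Real.hasDerivAt_arcsin (by linarith) (ne_of_lt hflt)
      have hcomp : HasDerivWithinAt (fun s => Real.arcsin (f s))
          (1 / Real.sqrt (1 - f x ^ 2) * g x) (Set.Ici x) x :=
        harc.comp_hasDerivWithinAt x hfd
      have hsqrt : Real.sqrt (1 - f x ^ 2) = g x := by
        rw [show 1 - f x ^ 2 = g x ^ 2 by linarith [hsq x hxI]]
        exact Real.sqrt_sq (hgpos' x hx).le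
      have hne : g x ≠ 0 := (hgpos' x hx).ne'
      have h1 : (1 / Real.sqrt (1 - f x ^ 2) * g x) = 1 := by
        rw [hsqrt]; field_simp
      rw [h1] at hcomp
      have := hcomp.fun_sub ((hasDerivAt_id x).hasDerivWithinAt)
      simpa using this
    intro x hx
    have := constant_of_has_deriv_right_zero hcont hderiv x hx
    rw [hf0, Real.arcsin_zero] at this
    simpa using this
  constructor
  · have h1 := htheta m hmmem
    have hfm1 : f m = 1 := by
      have := hsq m hmmem
      rw [hgm] at this
      nlinarith
    rw [hfm1, Real.arcsin_one] at h1
    linarith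
  · intro s hs
    have h1 := htheta s hs
    have h2 : Real.arcsin (f s) = s := by linarith
    have := Real.sin_arcsin (by linarith [hfge0 s hs] : -1 ≤ f s) (hfle1 s hs)
    rw [h2] at this
    exact this.symm
end

section
/- Let n ≥ 3 be an integer, Λ > 0, and w₀ > √((n−1)(n−2)/Λ); set Λ̃ := Λ/((n−1)(n−2)). Let D > 0 and let f : [0,D] → ℝ be twice continuously differentiable with f(0) ≥ w₀, f'(0) = 0, f(D) = 0, f'(D) = −1, f(s) > 0 for all s ∈ [0,D), and f''(s) ≤ 0 for all s ∈ [0,D]. Suppose that for every s ∈ (0,D) one has Λ ≤ (n−1)(n−2)·(1−f'(s)²)/f(s)² − 2(n−1)·f''(s)/f(s). Then D ≤ (2 n w₀/(n−2)) · 1/(Λ̃ w₀² − log(Λ̃ w₀²) − 1). -/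
open Set MeasureTheory

/-- Chebyshev integral inequality for oppositely monotone functions. -/
lemma cheb_integral {a b : ℝ} (hab : a ≤ b) {G V : ℝ → ℝ}
    (hG : ContinuousOn G (Icc a b)) (hV : ContinuousOn V (Icc a b))
    (hGanti : ∀ x ∈ Icc a b, ∀ y ∈ Icc a b, x ≤ y → G y ≤ G x)
    (hVmono : ∀ x ∈ Icc a b, ∀ y ∈ Icc a b, x ≤ y → V x ≤ V y) :
    (b - a) * ∫ x in a..b, G x * V x ≤ (∫ x in a..b, G x) * (∫ x in a..b, V x) := by
  have hGi : IntervalIntegrable G volume a b := hG.intervalIntegrable_of_Icc hab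
  have hVi : IntervalIntegrable V volume a b := hV.intervalIntegrable_of_Icc hab
  have hGVc : ContinuousOn (fun x => G x * V x) (Icc a b) := hG.mul hV
  have hGVi : IntervalIntegrable (fun x => G x * V x) volume a b :=
    hGVc.intervalIntegrable_of_Icc hab
  set IG := ∫ x in a..b, G x with hIG
  set IV := ∫ x in a..b, V x with hIV
  set IGV := ∫ x in a..b, G x * V x with hIGV
  have key : ∀ x ∈ Icc a b,
      ((b - a) * (G x * V x) - G x * IV) - (V x * IG - IGV) ≤ 0 := by
    intro x hx
    have inner : ∫ y in a..b, (G x - G y) * (V x - V y)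
        = ((b - a) * (G x * V x) - G x * IV) - (V x * IG - IGV) := by
      have eq1 : (fun y => (G x - G y) * (V x - V y))
          = fun y => (G x * V x - G x * V y) - (V x * G y - G y * V y) := by
        funext y; ring
      rw [eq1, intervalIntegral.integral_sub
          ((intervalIntegrable_const).sub (hVi.const_mul _))
          ((hGi.const_mul _).sub hGVi),
        intervalIntegral.integral_sub intervalIntegrable_const (hVi.const_mul _),
        intervalIntegral.integral_sub (hGi.const_mul _) hGVi,
        intervalIntegral.integral_const, intervalIntegral.integral_const_mul,
        intervalIntegral.integral_const_mul]
      simp only [smul_eq_mul, ← hIGV, ← hIG, ← hIV]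
      try ring
    rw [← inner]
    have hnn : 0 ≤ ∫ y in a..b, -((G x - G y) * (V x - V y)) := by
      apply intervalIntegral.integral_nonneg hab
      intro y hy
      rcases le_total x y with h | h
      · have h1 : G y ≤ G x := hGanti x hx y hy h
        have h2 : V x ≤ V y := hVmono x hx y hy h
        nlinarith
      · have h1 : G x ≤ G y := hGanti y hy x hx h
        have h2 : V y ≤ V x := hVmono y hy x hx h
        nlinarith
    rw [intervalIntegral.integral_neg] at hnn
    linarith
  have houter : (∫ x in a..b, (((b - a) * (G x * V x) - G x * IV) - (V x * IG - IGV))) ≤ 0 := by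
    have hnn : 0 ≤ ∫ x in a..b, -(((b - a) * (G x * V x) - G x * IV) - (V x * IG - IGV)) :=
      intervalIntegral.integral_nonneg hab (fun u hu => neg_nonneg.2 (key u hu))
    rw [intervalIntegral.integral_neg] at hnn
    linarith
  have hcalc : (∫ x in a..b, (((b - a) * (G x * V x) - G x * IV) - (V x * IG - IGV)))
      = 2 * (b - a) * IGV - 2 * IG * IV := by
    rw [intervalIntegral.integral_sub ((hGVi.const_mul _).sub (hGi.mul_const _))
        ((hVi.mul_const _).sub intervalIntegrable_const),
      intervalIntegral.integral_sub (hGVi.const_mul _) (hGi.mul_const _),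
      intervalIntegral.integral_sub (hVi.mul_const _) intervalIntegrable_const,
      intervalIntegral.integral_const, intervalIntegral.integral_const_mul,
      intervalIntegral.integral_mul_const, intervalIntegral.integral_mul_const]
    simp only [smul_eq_mul, ← hIGV, ← hIG, ← hIV]
    ring
  rw [hcalc] at houter
  linarith

lemma arith_nonpos_mul {a b : ℝ} (ha : a ≤ 0) (hb : b ≤ 0) : 0 ≤ a * b := by
  nlinarith [mul_nonneg (neg_nonneg.2 ha) (neg_nonneg.2 hb)]

lemma arith_pt {c L F q : ℝ} (hc : 0 < c) (hk : c * (L * F - 1 / F) ≤ -2 * q) :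
    L * F - 1 / F ≤ -2 / c * q := by
  have e : c * (-2 / c * q) = -2 * q := by field_simp
  have h2 : c * (L * F - 1 / F) ≤ c * (-2 / c * q) := by rw [e]; exact hk
  exact le_of_mul_le_mul_left h2 hc

lemma arith_c₀pos {c L w₀ : ℝ} (hc : 0 < c) (hw : 0 < w₀) (hx1 : 1 < L * w₀ ^ 2) :
    0 < c * (L * w₀ - 1 / w₀) / 2 := by
  have h : 1 / w₀ < L * w₀ := by rw [div_lt_iff₀ hw]; nlinarith
  have h2 : 0 < L * w₀ - 1 / w₀ := by linarith
  positivity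

lemma arith1 {L r w₀ : ℝ} (hL : 0 < L) (hr : 0 ≤ r) (hrw : r < w₀) (hLr : L * r ^ 2 = 1) :
    1 < L * w₀ ^ 2 := by nlinarith

lemma arith_key {N1 c L F p q : ℝ} (hN1 : 0 < N1) (hc : 0 < c) (hF : 0 < F)
    (h2 : N1 * c * L * F ^ 2 ≤ N1 * c * (1 - p ^ 2) - 2 * N1 * q * F) :
    c * (L * F - 1 / F) ≤ -2 * q := by
  have key : c * (L * F ^ 2 - 1) ≤ -2 * q * F := by
    nlinarith [h2, mul_nonneg (mul_nonneg hN1.le hc.le) (sq_nonneg p)]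
  have e : (c * (L * F - 1 / F)) * F = c * (L * F ^ 2 - 1) := by
    have h : (L * F - 1 / F) * F = L * F ^ 2 - 1 := by
      field_simp
    calc (c * (L * F - 1 / F)) * F = c * ((L * F - 1 / F) * F) := by ring
      _ = c * (L * F ^ 2 - 1) := by rw [h]
  have h3 : (c * (L * F - 1 / F)) * F ≤ (-2 * q) * F := by rw [e]; linarith
  exact le_of_mul_le_mul_right h3 hF

lemma arith_c₀ {c w₀ F L q : ℝ} (hc : 0 < c) (hw : 0 < w₀) (hF : 0 < F) (hwF : w₀ ≤ F)
    (hL : 0 < L) (hkey : c * (L * F - 1 / F) ≤ -2 * q) :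
    0 ≤ -q - c * (L * w₀ - 1 / w₀) / 2 := by
  have h2 : L * w₀ ≤ L * F := mul_le_mul_of_nonneg_left hwF hL.le
  have h3 : 1 / F ≤ 1 / w₀ := one_div_le_one_div_of_le hw hwF
  have h1 : c * (L * w₀ - 1 / w₀) ≤ c * (L * F - 1 / F) :=
    mul_le_mul_of_nonneg_left (by linarith) hc.le
  linarith

lemma arith_mid {c K v w rr S : ℝ} (hc : 0 < c) (hS : 0 ≤ S) (hrr : 0 ≤ rr) (hv : 0 ≤ v)
    (hw : 0 < w) (h : S * K ≤ (2 / c * v) * (w - rr)) : c * K * S ≤ 2 * v * w := by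
  have h2 := mul_le_mul_of_nonneg_left h hc.le
  have e : c * ((2 / c * v) * (w - rr)) = 2 * v * (w - rr) := by field_simp
  nlinarith [mul_nonneg hv hrr]

lemma arith_h₁ {c K L w₀ c₀ s₀ v₀ : ℝ} (hc : 0 < c) (hK : 0 < K) (hw : 0 < w₀)
    (hKle : 2 * K ≤ L * w₀ ^ 2 - 1) (hst : c₀ * s₀ ≤ v₀)
    (hc₀w : c₀ * w₀ = c * (L * w₀ ^ 2 - 1) / 2) (hs₀ : 0 ≤ s₀) (hc₀ : 0 < c₀) :
    c * K * s₀ ≤ v₀ * w₀ := by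
  have h1 : c * K ≤ c₀ * w₀ := by rw [hc₀w]; nlinarith
  nlinarith [mul_le_mul_of_nonneg_right hst hw.le]

lemma arith_h₃ {cK v₁ Ds r w₀ : ℝ} (ha : cK ≤ v₁ ^ 2) (hv₁ : 0 < v₁)
    (h6 : v₁ * Ds ≤ r) (hrw : r ≤ w₀) (hDs : 0 ≤ Ds) : cK * Ds ≤ v₁ * w₀ := by
  nlinarith [mul_le_mul_of_nonneg_right ha hDs, mul_le_mul_of_nonneg_left h6 hv₁.le,
    mul_le_mul_of_nonneg_left hrw hv₁.le]

lemma arith_tot {cK D s₀ s₁ v₀ v₁ w₀ nn : ℝ} (h₁ : cK * s₀ ≤ v₀ * w₀)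
    (h₂ : cK * (s₁ - s₀) ≤ 2 * (v₁ - v₀) * w₀) (h₃ : cK * (D - s₁) ≤ v₁ * w₀)
    (hv₀ : 0 ≤ v₀) (hv₁ : v₁ ≤ 1) (hw : 0 < w₀) (hnn : 3 ≤ nn) : cK * D ≤ nn * w₀ := by
  nlinarith [mul_le_mul_of_nonneg_right hv₁ hw.le, mul_nonneg hv₀ hw.le,
    mul_le_mul_of_nonneg_right hnn hw.le]

set_option maxHeartbeats 1000000 in
/-- A priori diameter estimate: a rotationally symmetric metric on the `n`-hemisphere
with `Scal ≥ Λ > 0`, `Ric ≥ 0` (i.e. `f'' ≤ 0`), and totally geodesic boundary sphere of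
radius `f(0) ≥ w₀ > √((n-1)(n-2)/Λ)` has length `D` explicitly bounded above. -/
theorem diameter_estimate (n : ℕ) (hn : 3 ≤ n) (Λ w₀ : ℝ) (hΛ : 0 < Λ)
    (hw₀ : Real.sqrt (((n : ℝ) - 1) * ((n : ℝ) - 2) / Λ) < w₀)
    (D : ℝ) (hD : 0 < D) (f f' f'' : ℝ → ℝ)
    (hderiv1 : ∀ s ∈ Set.Icc (0 : ℝ) D, HasDerivWithinAt f (f' s) (Set.Icc (0 : ℝ) D) s)
    (hderiv2 : ∀ s ∈ Set.Icc (0 : ℝ) D, HasDerivWithinAt f' (f'' s) (Set.Icc (0 : ℝ) D) s)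
    (hcont : ContinuousOn f'' (Set.Icc (0 : ℝ) D))
    (hf0 : w₀ ≤ f 0) (hf'0 : f' 0 = 0) (hfD : f D = 0) (hf'D : f' D = -1)
    (hpos : ∀ s ∈ Set.Ico (0 : ℝ) D, 0 < f s)
    (hconc : ∀ s ∈ Set.Icc (0 : ℝ) D, f'' s ≤ 0)
    (hscal : ∀ s ∈ Set.Ioo (0 : ℝ) D,
      Λ ≤ ((n : ℝ) - 1) * ((n : ℝ) - 2) * (1 - (f' s) ^ 2) / (f s) ^ 2
          - 2 * ((n : ℝ) - 1) * (f'' s) / (f s)) :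
    D ≤ (2 * (n : ℝ) * w₀ / ((n : ℝ) - 2)) *
        (1 / (Λ / (((n : ℝ) - 1) * ((n : ℝ) - 2)) * w₀ ^ 2
              - Real.log (Λ / (((n : ℝ) - 1) * ((n : ℝ) - 2)) * w₀ ^ 2) - 1)) := by
  have hn3 : (3 : ℝ) ≤ (n : ℝ) := by exact_mod_cast hn
  set N1 : ℝ := (n : ℝ) - 1 with hN1def
  set c : ℝ := (n : ℝ) - 2 with hcdef
  have hN1 : 2 ≤ N1 := by rw [hN1def]; linarith
  have hc : 1 ≤ c := by rw [hcdef]; linarith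
  have hcpos : 0 < c := by linarith
  have hN1pos : 0 < N1 := by linarith
  set L : ℝ := Λ / (N1 * c) with hLdef
  have hL : 0 < L := div_pos hΛ (mul_pos hN1pos hcpos)
  have hΛeq : Λ = N1 * c * L := by rw [hLdef]; field_simp
  have w₀pos : 0 < w₀ := lt_of_le_of_lt (Real.sqrt_nonneg _) hw₀
  set r : ℝ := Real.sqrt (1 / L) with hrdef
  have hr0 : 0 < r := Real.sqrt_pos.2 (by positivity)
  have hr2 : r ^ 2 = 1 / L := Real.sq_sqrt (by positivity)
  have hrw : r < w₀ := by
    have h : N1 * c / Λ = 1 / L := by rw [hLdef]; field_simp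
    rw [hrdef, ← h]; exact hw₀
  have hLr : L * r ^ 2 = 1 := by rw [hr2]; field_simp
  have hx1 : 1 < L * w₀ ^ 2 := arith1 hL hr0.le hrw hLr
  set K : ℝ := (L * w₀ ^ 2 - Real.log (L * w₀ ^ 2) - 1) / 2 with hKdef
  have hK : 0 < K := by
    have := Real.log_lt_sub_one_of_pos (by positivity : (0:ℝ) < L * w₀ ^ 2) (by linarith)
    rw [hKdef]; linarith
  have hlogr : Real.log r = -(Real.log L) / 2 := by
    rw [hrdef, Real.log_sqrt (by positivity), one_div, Real.log_inv]
  have hr2' : L / 2 * r ^ 2 = 1 / 2 := by rw [hr2]; field_simp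
  have hlogx : Real.log (L * w₀ ^ 2) = Real.log L + 2 * Real.log w₀ := by
    rw [Real.log_mul hL.ne' (by positivity), Real.log_pow]; push_cast; ring
  have hKval : (L / 2 * w₀ ^ 2 - Real.log w₀) - (L / 2 * r ^ 2 - Real.log r) = K := by
    rw [hKdef, hr2', hlogr, hlogx]; ring
  clear_value N1 c L r K
  -- continuity and basic monotonicity
  have hfc : ContinuousOn f (Icc 0 D) := fun s hs => (hderiv1 s hs).continuousWithinAt
  have hf'c : ContinuousOn f' (Icc 0 D) := fun s hs => (hderiv2 s hs).continuousWithinAt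
  have hfd : ∀ x ∈ Ioo (0:ℝ) D, HasDerivAt f (f' x) x := fun x hx =>
    (hderiv1 x (Ioo_subset_Icc_self hx)).hasDerivAt (Icc_mem_nhds hx.1 hx.2)
  have hf'd : ∀ x ∈ Ioo (0:ℝ) D, HasDerivAt f' (f'' x) x := fun x hx =>
    (hderiv2 x (Ioo_subset_Icc_self hx)).hasDerivAt (Icc_mem_nhds hx.1 hx.2)
  have hf'anti : AntitoneOn f' (Icc 0 D) := by
    apply antitoneOn_of_hasDerivWithinAt_nonpos (convex_Icc 0 D) hf'c
      (f' := f'') (fun x hx => (hderiv2 x (interior_subset hx)).mono interior_subset)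
      (fun x hx => hconc x (interior_subset hx))
  have hfanti : AntitoneOn f (Icc 0 D) := by
    apply antitoneOn_of_hasDerivWithinAt_nonpos (convex_Icc 0 D) hfc
      (f' := f') (fun x hx => (hderiv1 x (interior_subset hx)).mono interior_subset)
      (fun x hx => by
        rw [interior_Icc] at hx
        have h := hf'anti (left_mem_Icc.2 hD.le) (Ioo_subset_Icc_self hx) hx.1.le
        rw [hf'0] at h; exact h)
  have hf'le : ∀ s ∈ Icc (0:ℝ) D, f' s ≤ 0 := fun s hs => by
    have h := hf'anti (left_mem_Icc.2 hD.le) hs hs.1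
    rwa [hf'0] at h
  have hf'ge : ∀ s ∈ Icc (0:ℝ) D, -1 ≤ f' s := fun s hs => by
    have h := hf'anti hs (right_mem_Icc.2 hD.le) hs.2
    rwa [hf'D] at h
  -- key pointwise inequality
  have hkey2 : ∀ s ∈ Ioo (0:ℝ) D, c * (L * f s - 1 / f s) ≤ -2 * f'' s := by
    intro s hs
    have hF : 0 < f s := hpos s ⟨hs.1.le, hs.2⟩
    have h := hscal s hs
    have h2 : Λ * (f s) ^ 2 ≤ N1 * c * (1 - f' s ^ 2) - 2 * N1 * f'' s * f s := by
      have e : (N1 * c * (1 - f' s ^ 2) / f s ^ 2 - 2 * N1 * f'' s / f s) * f s ^ 2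
          = N1 * c * (1 - f' s ^ 2) - 2 * N1 * f'' s * f s := by
        field_simp
      calc Λ * (f s) ^ 2
          ≤ (N1 * c * (1 - f' s ^ 2) / f s ^ 2 - 2 * N1 * f'' s / f s) * f s ^ 2 :=
            mul_le_mul_of_nonneg_right h (sq_nonneg _)
        _ = _ := e
    rw [hΛeq] at h2
    exact arith_key hN1pos hcpos hF h2
  -- existence of s₀ s₁
  obtain ⟨s₀, hs₀mem, hfs₀⟩ : ∃ s₀ ∈ Icc (0:ℝ) D, f s₀ = w₀ := by
    have h := intermediate_value_Icc' hD.le hfc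
    have hmem : w₀ ∈ Icc (f D) (f 0) := ⟨by rw [hfD]; exact w₀pos.le, hf0⟩
    obtain ⟨s₀, hs₀, he⟩ := h hmem
    exact ⟨s₀, hs₀, he⟩
  obtain ⟨s₁, hs₁mem, hfs₁⟩ : ∃ s₁ ∈ Icc (0:ℝ) D, f s₁ = r := by
    have h := intermediate_value_Icc' hD.le hfc
    have hmem : r ∈ Icc (f D) (f 0) := ⟨by rw [hfD]; exact hr0.le, by linarith⟩
    obtain ⟨s₁, hs₁, he⟩ := h hmem
    exact ⟨s₁, hs₁, he⟩
  have hs₀0 : 0 ≤ s₀ := hs₀mem.1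
  have hs₁0 : 0 ≤ s₁ := hs₁mem.1
  have hs₀s₁ : s₀ < s₁ := by
    by_contra h
    push_neg at h
    have h2 := hfanti hs₁mem hs₀mem h
    rw [hfs₀, hfs₁] at h2; linarith
  have hs₁D : s₁ < D := by
    rcases lt_or_eq_of_le hs₁mem.2 with h | h
    · exact h
    · exfalso; rw [h, hfD] at hfs₁; linarith
  have hfge_r : ∀ s ∈ Icc (0:ℝ) s₁, r ≤ f s := fun s hs => by
    have h := hfanti ⟨hs.1, le_trans hs.2 hs₁mem.2⟩ hs₁mem hs.2
    rwa [hfs₁] at h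
  have hfge_w : ∀ s ∈ Icc (0:ℝ) s₀, w₀ ≤ f s := fun s hs => by
    have h := hfanti ⟨hs.1, le_trans hs.2 hs₀mem.2⟩ hs₀mem hs.2
    rwa [hfs₀] at h
  set v₀ : ℝ := -f' s₀ with hv₀def
  set v₁ : ℝ := -f' s₁ with hv₁def
  have hv₀ : 0 ≤ v₀ := by have := hf'le s₀ hs₀mem; rw [hv₀def]; linarith
  have hv₁1 : v₁ ≤ 1 := by have := hf'ge s₁ hs₁mem; rw [hv₁def]; linarith
  have hv₀₁ : v₀ ≤ v₁ := by
    have := hf'anti hs₀mem hs₁mem hs₀s₁.le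
    rw [hv₀def, hv₁def]; linarith
  clear_value v₀ v₁
  have subset15 : Icc s₀ s₁ ⊆ Icc 0 D := Icc_subset_Icc hs₀0 hs₁D.le
  have hfpos' : ∀ x ∈ Icc s₀ s₁, 0 < f x := fun x hx =>
    lt_of_lt_of_le hr0 (hfge_r x ⟨le_trans hs₀0 hx.1, hx.2⟩)
  have hIoosub : Ioo s₀ s₁ ⊆ Ioo 0 D := fun x hx =>
    ⟨lt_of_le_of_lt hs₀0 hx.1, lt_trans hx.2 hs₁D⟩
  -- Step 4 : s₀ bound
  set c₀ : ℝ := c * (L * w₀ - 1 / w₀) / 2 with hc₀def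
  have hc₀pos : 0 < c₀ := by
    rw [hc₀def]; exact arith_c₀pos hcpos w₀pos hx1
  clear_value c₀
  have hstep4 : c₀ * s₀ ≤ v₀ := by
    have hmono : MonotoneOn (fun s => -f' s - c₀ * s) (Icc 0 s₀) := by
      apply monotoneOn_of_hasDerivWithinAt_nonneg (convex_Icc 0 s₀)
        (f' := fun x => -f'' x - c₀)
      · exact ((hf'c.mono (Icc_subset_Icc_right hs₀mem.2)).neg).sub
          ((continuous_const.mul continuous_id).continuousOn)
      · intro x hx
        rw [interior_Icc] at hx
        have hx' : x ∈ Ioo 0 D := ⟨hx.1, lt_of_lt_of_le hx.2 hs₀mem.2⟩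
        have hd : HasDerivAt (fun s => -f' s - c₀ * s) (-f'' x - c₀) x := by
          simpa using ((hf'd x hx').fun_neg).fun_sub ((hasDerivAt_id x).const_mul c₀)
        exact hd.hasDerivWithinAt
      · intro x hx
        rw [interior_Icc] at hx
        have hx' : x ∈ Ioo 0 D := ⟨hx.1, lt_of_lt_of_le hx.2 hs₀mem.2⟩
        have hw : w₀ ≤ f x := hfge_w x ⟨hx.1.le, hx.2.le⟩
        have hF : 0 < f x := lt_of_lt_of_le w₀pos hw
        have hk := hkey2 x hx'
        rw [hc₀def]
        exact arith_c₀ hcpos w₀pos hF hw hL hk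
    have h0 : (0:ℝ) ∈ Icc (0:ℝ) s₀ := left_mem_Icc.2 hs₀0
    have hs : s₀ ∈ Icc (0:ℝ) s₀ := right_mem_Icc.2 hs₀0
    have hm := hmono h0 hs hs₀0
    simp only [hf'0, neg_zero, mul_zero, sub_zero] at hm
    rw [hv₀def]; linarith
  -- Step 5 : energy monotonicity
  have hstep5 : v₀ ^ 2 + c * K ≤ v₁ ^ 2 := by
    have hmono : MonotoneOn (fun s => (f' s) ^ 2 + c * (L / 2 * (f s) ^ 2 - Real.log (f s)))
        (Icc s₀ s₁) := by
      apply monotoneOn_of_hasDerivWithinAt_nonneg (convex_Icc s₀ s₁)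
        (f' := fun x => f' x * (2 * f'' x + c * (L * f x - 1 / f x)))
      · apply ContinuousOn.add ((hf'c.mono subset15).pow 2)
        apply continuousOn_const.mul
        exact (continuousOn_const.mul ((hfc.mono subset15).pow 2)).sub
          ((hfc.mono subset15).log (fun x hx => (hfpos' x hx).ne'))
      · intro x hx
        rw [interior_Icc] at hx
        have hx' : x ∈ Ioo 0 D := hIoosub hx
        have hF : 0 < f x := hfpos' x (Ioo_subset_Icc_self hx)
        have h1 : HasDerivAt (fun s => (f' s) ^ 2) (2 * f' x * f'' x) x := by
          have h := (hf'd x hx').fun_pow 2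
          refine h.congr_deriv ?_
          push_cast; ring
        have h2 : HasDerivAt (fun s => L / 2 * (f s) ^ 2) (L / 2 * (2 * f x * f' x)) x := by
          have h := ((hfd x hx').fun_pow 2).const_mul (L / 2)
          refine h.congr_deriv ?_
          push_cast; ring
        have h3 : HasDerivAt (fun s => Real.log (f s)) (f' x / f x) x :=
          (hfd x hx').log hF.ne'
        have hE : HasDerivAt (fun s => (f' s) ^ 2 + c * (L / 2 * (f s) ^ 2 - Real.log (f s)))
            (f' x * (2 * f'' x + c * (L * f x - 1 / f x))) x := by
          have h4 := h1.fun_add ((h2.fun_sub h3).const_mul c)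
          refine h4.congr_deriv ?_
          field_simp
        exact hE.hasDerivWithinAt
      · intro x hx
        rw [interior_Icc] at hx
        have hx' : x ∈ Ioo 0 D := hIoosub hx
        have hle := hf'le x (Ioo_subset_Icc_self hx')
        have hk := hkey2 x hx'
        have h5 : 2 * f'' x + c * (L * f x - 1 / f x) ≤ 0 := by linarith
        exact arith_nonpos_mul hle h5
    have hend : f' s₀ ^ 2 + c * (L / 2 * (f s₀) ^ 2 - Real.log (f s₀))
        ≤ f' s₁ ^ 2 + c * (L / 2 * (f s₁) ^ 2 - Real.log (f s₁)) :=
      hmono (left_mem_Icc.2 hs₀s₁.le) (right_mem_Icc.2 hs₀s₁.le) hs₀s₁.le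
    rw [hfs₀, hfs₁] at hend
    have hcK' : c * (L / 2 * w₀ ^ 2 - Real.log w₀) - c * (L / 2 * r ^ 2 - Real.log r)
        = c * K := by rw [← hKval]; ring
    have hv0 : v₀ ^ 2 = (f' s₀) ^ 2 := by rw [hv₀def]; ring
    have hv1 : v₁ ^ 2 = (f' s₁) ^ 2 := by rw [hv₁def]; ring
    rw [hv0, hv1]; linarith
  have hcK : 0 < c * K := mul_pos hcpos hK
  have hv₁sq : c * K ≤ v₁ ^ 2 := by linarith [sq_nonneg v₀]
  have hv₁nn : 0 ≤ v₁ := le_trans hv₀ hv₀₁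
  have hv₁pos : 0 < v₁ := by
    rcases hv₁nn.lt_or_eq with h | h
    · exact h
    · exfalso; rw [← h] at hv₁sq; simp at hv₁sq; linarith
  -- Step 6 : tail bound
  have hstep6 : v₁ * (D - s₁) ≤ r := by
    have hmono : MonotoneOn (fun s => -f s - v₁ * s) (Icc s₁ D) := by
      apply monotoneOn_of_hasDerivWithinAt_nonneg (convex_Icc s₁ D)
        (f' := fun x => -f' x - v₁)
      · exact ((hfc.mono (Icc_subset_Icc_left hs₁0)).neg).sub
          ((continuous_const.mul continuous_id).continuousOn)
      · intro x hx
        rw [interior_Icc] at hx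
        have hx' : x ∈ Ioo 0 D := ⟨lt_of_le_of_lt hs₁0 hx.1, hx.2⟩
        have hd : HasDerivAt (fun s => -f s - v₁ * s) (-f' x - v₁) x := by
          simpa using ((hfd x hx').fun_neg).fun_sub ((hasDerivAt_id x).const_mul v₁)
        exact hd.hasDerivWithinAt
      · intro x hx
        rw [interior_Icc] at hx
        have h := hf'anti hs₁mem ⟨le_trans hs₁0 hx.1.le, hx.2.le⟩ hx.1.le
        rw [hv₁def]
        linarith [h]
    have hend : -f s₁ - v₁ * s₁ ≤ -f D - v₁ * D :=
      hmono (left_mem_Icc.2 hs₁D.le) (right_mem_Icc.2 hs₁D.le) hs₁D.le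
    rw [hfD, hfs₁] at hend
    have e : v₁ * (D - s₁) = v₁ * D - v₁ * s₁ := by ring
    linarith [hend]
  -- Step 7 : middle bound via Chebyshev
  have hstep7 : c * K * (s₁ - s₀) ≤ 2 * (v₁ - v₀) * w₀ := by
    have hs01 : s₀ ≤ s₁ := hs₀s₁.le
    have hGc : ContinuousOn (fun x => L * f x - 1 / f x) (Icc s₀ s₁) := by
      apply ContinuousOn.sub (continuousOn_const.mul (hfc.mono subset15))
      exact continuousOn_const.div (hfc.mono subset15) (fun x hx => (hfpos' x hx).ne')
    have hVc : ContinuousOn (fun x => -f' x) (Icc s₀ s₁) := (hf'c.mono subset15).neg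
    have I1 : ∫ x in s₀..s₁, f'' x = f' s₁ - f' s₀ :=
      intervalIntegral.integral_eq_sub_of_hasDeriv_right_of_le hs01 (hf'c.mono subset15)
        (fun x hx => ((hf'd x (hIoosub hx)).hasDerivWithinAt))
        ((hcont.mono subset15).intervalIntegrable_of_Icc hs01)
    have I2 : ∫ x in s₀..s₁, -f' x = w₀ - r := by
      have h := intervalIntegral.integral_eq_sub_of_hasDeriv_right_of_le hs01
        (hfc.mono subset15) (fun x hx => (hfd x (hIoosub hx)).hasDerivWithinAt)
        ((hf'c.mono subset15).intervalIntegrable_of_Icc hs01)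
      rw [intervalIntegral.integral_neg, h, hfs₀, hfs₁]; ring
    have I3 : ∫ x in s₀..s₁, (L * f x - 1 / f x) * (-f' x) = K := by
      have hd : ∀ x ∈ Ioo s₀ s₁, HasDerivWithinAt
          (fun s => -(L / 2 * (f s) ^ 2 - Real.log (f s)))
          ((L * f x - 1 / f x) * (-f' x)) (Ioi x) x := by
        intro x hx
        have hx' := hIoosub hx
        have hF : 0 < f x := hfpos' x (Ioo_subset_Icc_self hx)
        have h2 : HasDerivAt (fun s => L / 2 * (f s) ^ 2) (L / 2 * (2 * f x * f' x)) x := by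
          have h := ((hfd x hx').fun_pow 2).const_mul (L / 2)
          refine h.congr_deriv ?_
          push_cast; ring
        have h3 : HasDerivAt (fun s => Real.log (f s)) (f' x / f x) x :=
          (hfd x hx').log hF.ne'
        have h4 : HasDerivAt (fun s => -(L / 2 * (f s) ^ 2 - Real.log (f s)))
            ((L * f x - 1 / f x) * (-f' x)) x := by
          have h5 := (h2.fun_sub h3).fun_neg
          refine h5.congr_deriv ?_
          field_simp
        exact h4.hasDerivWithinAt
      have hca : ContinuousOn (fun s => -(L / 2 * (f s) ^ 2 - Real.log (f s))) (Icc s₀ s₁) := by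
        apply ContinuousOn.neg
        exact (continuousOn_const.mul ((hfc.mono subset15).pow 2)).sub
          ((hfc.mono subset15).log (fun x hx => (hfpos' x hx).ne'))
      have h := intervalIntegral.integral_eq_sub_of_hasDeriv_right_of_le hs01 hca hd
        ((hGc.mul hVc).intervalIntegrable_of_Icc hs01)
      rw [h, hfs₀, hfs₁, ← hKval]; ring
    have I4 : ∫ x in s₀..s₁, (L * f x - 1 / f x) ≤ 2 / c * (v₁ - v₀) := by
      have hpt0 : ∀ x ∈ Ioo s₀ s₁, L * f x - 1 / f x ≤ -2 / c * f'' x := by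
        intro x hx
        exact arith_pt hcpos (hkey2 x (hIoosub hx))
      have hpt : ∀ x ∈ Icc s₀ s₁, L * f x - 1 / f x ≤ -2 / c * f'' x := by
        have hcl := le_on_closure hpt0
          (by rw [closure_Ioo hs₀s₁.ne]; exact hGc)
          (by rw [closure_Ioo hs₀s₁.ne];
              exact continuousOn_const.mul (hcont.mono subset15))
        intro x hx
        exact hcl (by rw [closure_Ioo hs₀s₁.ne]; exact hx)
      have h := intervalIntegral.integral_mono_on (μ := volume) hs01
        (hGc.intervalIntegrable_of_Icc hs01)
        ((continuousOn_const.mul (hcont.mono subset15)).intervalIntegrable_of_Icc hs01)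
        hpt
      simp only [Pi.mul_apply] at h
      rw [intervalIntegral.integral_const_mul, I1] at h
      calc (∫ x in s₀..s₁, (L * f x - 1 / f x)) ≤ -2 / c * (f' s₁ - f' s₀) := h
        _ = 2 / c * (v₁ - v₀) := by rw [hv₀def, hv₁def]; ring
    have hcheb := cheb_integral hs01 hGc hVc
      (fun x hx y hy hxy => by
        have hfxy : f y ≤ f x := hfanti (subset15 hx) (subset15 hy) hxy
        have hfx : 0 < f x := hfpos' x hx
        have hfy : 0 < f y := hfpos' y hy
        have h2 : L * f y ≤ L * f x := mul_le_mul_of_nonneg_left hfxy hL.le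
        have h3 : 1 / f x ≤ 1 / f y := one_div_le_one_div_of_le hfy hfxy
        linarith)
      (fun x hx y hy hxy => by
        have := hf'anti (subset15 hx) (subset15 hy) hxy
        linarith)
    rw [I3, I2] at hcheb
    have h5 : (s₁ - s₀) * K ≤ (2 / c * (v₁ - v₀)) * (w₀ - r) := by
      calc (s₁ - s₀) * K ≤ (∫ x in s₀..s₁, (L * f x - 1 / f x)) * (w₀ - r) := hcheb
        _ ≤ (2 / c * (v₁ - v₀)) * (w₀ - r) :=
          mul_le_mul_of_nonneg_right I4 (by linarith)
    exact arith_mid hcpos (by linarith) hr0.le (by linarith) w₀pos h5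
  -- assemble
  have hKle : 2 * K ≤ L * w₀ ^ 2 - 1 := by
    have := Real.log_nonneg hx1.le
    rw [hKdef]; linarith
  have h₁ : c * K * s₀ ≤ v₀ * w₀ := by
    have e : c₀ * w₀ = c * (L * w₀ ^ 2 - 1) / 2 := by
      rw [hc₀def]; field_simp
    exact arith_h₁ hcpos hK w₀pos hKle hstep4 e hs₀0 hc₀pos
  have h₃ : c * K * (D - s₁) ≤ v₁ * w₀ :=
    arith_h₃ hv₁sq hv₁pos hstep6 hrw.le (by linarith)
  have htot : c * K * D ≤ (n : ℝ) * w₀ :=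
    arith_tot h₁ hstep7 h₃ hv₀ hv₁1 w₀pos hn3
  have h2K : L * w₀ ^ 2 - Real.log (L * w₀ ^ 2) - 1 = 2 * K := by rw [hKdef]; ring
  rw [h2K, div_mul_div_comm, mul_one, le_div_iff₀ (by positivity)]
  have e : D * (c * (2 * K)) = 2 * (c * K * D) := by ring
  linarith [htot, e]
end

section
/- Let n ≥ 3 be an integer and ε ∈ (0,1) with (1−ε)⁴ > (n−2)/n. Let D > 0 and let f : [0,D] → ℝ be twice continuously differentiable with f(0) = 0, f(D) = 0, f'(0) = 1, f'(D) = −1, f(s) > 0 for all s ∈ (0,D), and f''(s) ≤ 0 for all s ∈ [0,D]. Suppose that for every s ∈ (0,D) one has (n−1)(n−2)·(1−f'(s)²)/f(s)² − 2(n−1)·f''(s)/f(s) ≥ n(n−1)(1−ε)², and that sup_{s∈[0,D]} f(s) ≥ 1−ε. Then there exists exactly one s₀ ∈ (0,D) with f'(s₀) = 0, and moreover f''(s₀) < 0. -/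
/-!
The maximum point `s₀` of `f` is interior, because `f s₀ ≥ 1 - ε > 0 = f 0 = f D`,
so `f' s₀ = 0`. If also `f'' s₀ = 0`, the scalar curvature at `s₀` is `(n - 1)(n - 2) / f(s₀)²`,
and `f s₀ ≥ 1 - ε` together with `(n - 2) / n < (1 - ε)⁴` puts it below `n(n - 1)(1 - ε)²`;
hence `f'' s₀ < 0`. Since `f'' ≤ 0`, `f'` is antitone, so a second zero of `f'` would make `f'`
constant between the two zeros and force `f'' s₀ = 0`.
-/

open Set

/-- The scalar curvature of `ds² + f(s)² g_round` on `Sⁿ` at a point where `f, f', f''` take the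
values `F, F', F''`. -/
noncomputable def warpedScalarCurvature (n F F' F'' : ℝ) : ℝ :=
  (n - 1) * (n - 2) * (1 - F' ^ 2) / F ^ 2 - 2 * (n - 1) * F'' / F

lemma warpedScalarCurvature_zero_zero (n F : ℝ) :
    warpedScalarCurvature n F 0 0 = (n - 1) * (n - 2) / F ^ 2 := by
  simp [warpedScalarCurvature]

lemma warpedScalarCurvature_zero_zero_lt {n c F : ℝ} (hn : 1 < n) (hc : 0 < c)
    (hcn : (n - 2) / n < c ^ 4) (hF : c ≤ F) :
    warpedScalarCurvature n F 0 0 < n * (n - 1) * c ^ 2 := by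
  have hF0 : 0 < F := hc.trans_le hF
  have hcF : c ^ 4 ≤ c ^ 2 * F ^ 2 := by
    rw [show c ^ 4 = c ^ 2 * c ^ 2 by ring]
    gcongr
  have hn2 : n - 2 < n * (c ^ 2 * F ^ 2) := by
    rw [div_lt_iff₀ (by linarith)] at hcn
    nlinarith
  rw [warpedScalarCurvature_zero_zero, div_lt_iff₀ (by positivity)]
  nlinarith

lemma exists_isMaxOn_mem_Ioo_of_le_sSup {f : ℝ → ℝ} {a b c : ℝ} (hab : a ≤ b)
    (hf : ContinuousOn f (Icc a b)) (ha : f a < c) (hb : f b < c)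
    (hc : c ≤ sSup (f '' Icc a b)) :
    ∃ x ∈ Ioo a b, IsMaxOn f (Icc a b) x ∧ c ≤ f x := by
  obtain ⟨x, hx, hsup, hmax⟩ :=
    isCompact_Icc.exists_sSup_image_eq_and_ge (nonempty_Icc.2 hab) hf
  have hcx : c ≤ f x := hsup ▸ hc
  refine ⟨x, ⟨hx.1.lt_of_ne ?_, hx.2.lt_of_ne ?_⟩, hmax, hcx⟩
  · rintro rfl
    exact ha.not_ge hcx
  · rintro rfl
    exact hb.not_ge hcx

lemma AntitoneOn.eqOn_uIcc_of_eq {g : ℝ → ℝ} {s : Set ℝ} (hs : s.OrdConnected)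
    (hg : AntitoneOn g s) {x y : ℝ} (hx : x ∈ s) (hy : y ∈ s) (hxy : g x = g y) :
    EqOn g (fun _ ↦ g x) (uIcc x y) := by
  intro t ht
  have hts := hs.uIcc_subset hx hy ht
  rcases mem_uIcc.1 ht with ⟨hxt, hty⟩ | ⟨hyt, htx⟩
  · exact le_antisymm (hg hx hts hxt) (hxy ▸ hg hts hy hty)
  · exact le_antisymm (hxy ▸ hg hy hts hyt) (hg hts hx htx)

lemma AntitoneOn.eq_of_hasDerivWithinAt_ne_zero {g : ℝ → ℝ} {g' : ℝ} {s : Set ℝ}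
    (hs : s.OrdConnected) (hg : AntitoneOn g s) {x y : ℝ} (hx : x ∈ s) (hy : y ∈ s)
    (hxy : g x = g y) (hd : HasDerivWithinAt g g' s x) (hg' : g' ≠ 0) : x = y := by
  by_contra hne
  have hu : UniqueDiffWithinAt ℝ (uIcc x y) x :=
    uniqueDiffOn_Icc (min_lt_max.2 hne) x left_mem_uIcc
  have hconst : HasDerivWithinAt g 0 (uIcc x y) x :=
    (hasDerivWithinAt_const x _ (g x)).congr (hg.eqOn_uIcc_of_eq hs hx hy hxy) rfl
  exact hg' (hu.eq_deriv _ (hd.mono (hs.uIcc_subset hx hy)) hconst)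

lemma antitoneOn_Icc_of_hasDerivWithinAt_nonpos {g g' : ℝ → ℝ} {a b : ℝ}
    (hd : ∀ x ∈ Icc a b, HasDerivWithinAt g (g' x) (Icc a b) x)
    (hg' : ∀ x ∈ Icc a b, g' x ≤ 0) : AntitoneOn g (Icc a b) := by
  refine antitoneOn_of_hasDerivWithinAt_nonpos (convex_Icc a b)
    (fun x hx ↦ (hd x hx).continuousWithinAt) (fun x hx ↦ ?_)
    (fun x hx ↦ hg' x (interior_subset hx))
  exact (hd x (interior_subset hx)).mono interior_subset

theorem unique_minimal_leaf_ricci_general (n : ℕ) (hn : 3 ≤ n) (ε : ℝ) (hε : ε ∈ Set.Ioo (0 : ℝ) 1)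
    (hεn : ((n : ℝ) - 2) / (n : ℝ) < (1 - ε) ^ 4)
    (D : ℝ) (hD : 0 < D) (f f' f'' : ℝ → ℝ)
    (hderiv1 : ∀ s ∈ Set.Icc (0 : ℝ) D, HasDerivWithinAt f (f' s) (Set.Icc (0 : ℝ) D) s)
    (hderiv2 : ∀ s ∈ Set.Icc (0 : ℝ) D, HasDerivWithinAt f' (f'' s) (Set.Icc (0 : ℝ) D) s)
    (hf0 : f 0 = 0) (hfD : f D = 0)
    (hconc : ∀ s ∈ Set.Icc (0 : ℝ) D, f'' s ≤ 0)
    (hscal : ∀ s ∈ Set.Ioo (0 : ℝ) D,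
      (n : ℝ) * ((n : ℝ) - 1) * (1 - ε) ^ 2 ≤
        ((n : ℝ) - 1) * ((n : ℝ) - 2) * (1 - (f' s) ^ 2) / (f s) ^ 2
          - 2 * ((n : ℝ) - 1) * (f'' s) / (f s))
    (hsup : 1 - ε ≤ sSup (f '' Set.Icc (0 : ℝ) D)) :
    ∃ s₀ ∈ Set.Ioo (0 : ℝ) D, f' s₀ = 0 ∧ f'' s₀ < 0 ∧
      ∀ s ∈ Set.Ioo (0 : ℝ) D, f' s = 0 → s = s₀ := by
  have hε1 : 0 < 1 - ε := sub_pos.2 hε.2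
  obtain ⟨s₀, hs₀, hmax, hfs₀⟩ := exists_isMaxOn_mem_Ioo_of_le_sSup hD.le
    (fun s hs ↦ (hderiv1 s hs).continuousWithinAt) (by linarith) (by linarith) hsup
  have hs₀Icc : s₀ ∈ Icc 0 D := Ioo_subset_Icc_self hs₀
  have hs₀nhds : Icc 0 D ∈ nhds s₀ := Icc_mem_nhds hs₀.1 hs₀.2
  have hf's₀ : f' s₀ = 0 :=
    (hmax.isLocalMax hs₀nhds).hasDerivAt_eq_zero ((hderiv1 s₀ hs₀Icc).hasDerivAt hs₀nhds)
  have hf''s₀ : f'' s₀ < 0 := by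
    refine (hconc s₀ hs₀Icc).lt_of_ne fun hflat ↦ ?_
    have hscal₀ : (n : ℝ) * (n - 1) * (1 - ε) ^ 2 ≤ warpedScalarCurvature n (f s₀) 0 0 := by
      have h := hscal s₀ hs₀
      rwa [hf's₀, hflat] at h
    exact hscal₀.not_gt
      (warpedScalarCurvature_zero_zero_lt (by norm_cast; omega) hε1 hεn hfs₀)
  have hanti : AntitoneOn f' (Icc 0 D) :=
    antitoneOn_Icc_of_hasDerivWithinAt_nonpos hderiv2 hconc
  refine ⟨s₀, hs₀, hf's₀, hf''s₀, fun s hs hf's ↦ ?_⟩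
  exact (hanti.eq_of_hasDerivWithinAt_ne_zero ordConnected_Icc hs₀Icc (Ioo_subset_Icc_self hs)
    (hf's₀.trans hf's.symm) (hderiv2 s₀ hs₀Icc) hf''s₀.ne).symm

/-- Ricci-nonnegative version of the uniqueness lemma for the minimal leaf of the
canonical sweepout, with the MinA bound replaced by a width bound (`max f ≥ 1 - ε`). -/
theorem unique_minimal_leaf_ricci (n : ℕ) (hn : 3 ≤ n) (ε : ℝ) (hε : ε ∈ Set.Ioo (0 : ℝ) 1)
    (hεn : ((n : ℝ) - 2) / (n : ℝ) < (1 - ε) ^ 4)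
    (D : ℝ) (hD : 0 < D) (f f' f'' : ℝ → ℝ)
    (hderiv1 : ∀ s ∈ Set.Icc (0 : ℝ) D, HasDerivWithinAt f (f' s) (Set.Icc (0 : ℝ) D) s)
    (hderiv2 : ∀ s ∈ Set.Icc (0 : ℝ) D, HasDerivWithinAt f' (f'' s) (Set.Icc (0 : ℝ) D) s)
    (hcont : ContinuousOn f'' (Set.Icc (0 : ℝ) D))
    (hf0 : f 0 = 0) (hfD : f D = 0) (hf'0 : f' 0 = 1) (hf'D : f' D = -1)
    (hpos : ∀ s ∈ Set.Ioo (0 : ℝ) D, 0 < f s)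
    (hconc : ∀ s ∈ Set.Icc (0 : ℝ) D, f'' s ≤ 0)
    (hscal : ∀ s ∈ Set.Ioo (0 : ℝ) D,
      (n : ℝ) * ((n : ℝ) - 1) * (1 - ε) ^ 2 ≤
        ((n : ℝ) - 1) * ((n : ℝ) - 2) * (1 - (f' s) ^ 2) / (f s) ^ 2
          - 2 * ((n : ℝ) - 1) * (f'' s) / (f s))
    (hsup : 1 - ε ≤ sSup (f '' Set.Icc (0 : ℝ) D)) :
    ∃ s₀ ∈ Set.Ioo (0 : ℝ) D, f' s₀ = 0 ∧ f'' s₀ < 0 ∧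
      ∀ s ∈ Set.Ioo (0 : ℝ) D, f' s = 0 → s = s₀ :=
  unique_minimal_leaf_ricci_general n hn ε hε hεn D hD f f' f'' hderiv1 hderiv2 hf0 hfD hconc hscal
    hsup
end

section
/- Let n ≥ 3 be an integer, ε ∈ [0,1), and R > 0. Let V : (0,R] → ℝ be differentiable with V(r) ≥ 0 for all r ∈ (0,R], V(R) = 0, and suppose that for every r ∈ (0,R] one has (n−2)(1−V(r)) − r·V'(r) ≥ n(1−ε)² r², and that r^{n−2}(1−V(r)) → 0 as r → 0⁺. Then R ≤ 1/(1−ε). -/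
/-!
The quantity `G(r) = r^{n-2}(1 - V r) - (1-ε)² r^n` compares the mass of the coordinate sphere of
radius `r` with that of the round model. The curvature inequality says exactly that
`r G'(r) ≥ 0`, so `G` is nondecreasing on `(0, R]`; the smooth pole gives `G(0⁺) = 0`, hence
`0 ≤ G(R) = R^{n-2} - (1-ε)² R^n` because `V R = 0`, i.e. `(1-ε) R ≤ 1`.
-/

open Set Filter Topology

/-- `r^m (1 - V r)` is proportional to the Hawking mass of the sphere of radius `r` for
`dr²/V + r² g_round` in dimension `m + 2`, and `c r^(m+2)` is its value on the round model
`V = 1 - c r²`. -/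
def massExcess (m : ℕ) (c : ℝ) (V : ℝ → ℝ) (r : ℝ) : ℝ :=
  r ^ m * (1 - V r) - c * r ^ (m + 2)

section massExcess

variable {m : ℕ} {c : ℝ} {V : ℝ → ℝ}

theorem hasDerivWithinAt_massExcess {v r : ℝ} {s : Set ℝ} (hV : HasDerivWithinAt V v s r) :
    HasDerivWithinAt (massExcess m c V)
      (m * r ^ (m - 1) * (1 - V r) + r ^ m * (0 - v) - c * ((m + 2 : ℕ) * r ^ (m + 1))) s r :=
  ((hasDerivWithinAt_pow m r).mul ((hasDerivWithinAt_const r s 1).sub hV)).sub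
    ((hasDerivWithinAt_pow (m + 2) r).const_mul c)

theorem mul_deriv_massExcess (r v : ℝ) :
    r * (m * r ^ (m - 1) * (1 - V r) + r ^ m * (0 - v) - c * ((m + 2 : ℕ) * r ^ (m + 1))) =
      r ^ m * (m * (1 - V r) - r * v - (m + 2) * c * r ^ 2) := by
  rcases m with _ | m
  · simp only [Nat.cast_zero, pow_zero, zero_mul, zero_add]
    push_cast
    ring
  · simp only [Nat.add_sub_cancel]
    push_cast
    ring

theorem monotoneOn_massExcess {s : Set ℝ} (hs : Convex ℝ s) (hs₀ : s ⊆ Ioi 0) {V' : ℝ → ℝ}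
    (hV : ∀ r ∈ s, HasDerivWithinAt V (V' r) s r)
    (hcurv : ∀ r ∈ s, (m + 2) * c * r ^ 2 ≤ m * (1 - V r) - r * V' r) :
    MonotoneOn (massExcess m c V) s := by
  have hcont : ContinuousOn (massExcess m c V) s := fun r hr =>
    (hasDerivWithinAt_massExcess (hV r hr)).continuousWithinAt
  refine monotoneOn_of_hasDerivWithinAt_nonneg hs hcont
    (fun r hr => hasDerivWithinAt_massExcess ((hV r (interior_subset hr)).mono interior_subset))
    fun r hr => ?_
  have hr : r ∈ s := interior_subset hr
  have hpos : 0 < r := hs₀ hr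
  refine nonneg_of_mul_nonneg_right ?_ hpos
  rw [mul_deriv_massExcess]
  exact mul_nonneg (pow_nonneg hpos.le m) (sub_nonneg.mpr (hcurv r hr))

theorem tendsto_massExcess_nhdsGT_zero
    (hpole : Tendsto (fun r => r ^ m * (1 - V r)) (𝓝[>] 0) (𝓝 0)) :
    Tendsto (massExcess m c V) (𝓝[>] 0) (𝓝 0) := by
  have hmodel : Tendsto (fun r : ℝ => c * r ^ (m + 2)) (𝓝[>] 0) (𝓝 0) := by
    have h := ((continuous_pow (m + 2)).const_mul c).tendsto (0 : ℝ)
    rw [zero_pow (Nat.succ_ne_zero _), mul_zero] at h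
    exact h.mono_left nhdsWithin_le_nhds
  have h := hpole.sub hmodel
  rw [sub_zero] at h
  exact h

end massExcess

theorem MonotoneOn.le_of_tendsto_nhdsGT {f : ℝ → ℝ} {a b L : ℝ} (hab : a < b)
    (hf : MonotoneOn f (Ioc a b)) (hL : Tendsto f (𝓝[>] a) (𝓝 L)) : L ≤ f b :=
  le_of_tendsto hL <| mem_of_superset (Ioo_mem_nhdsGT hab) fun _ hr =>
    hf (Ioo_subset_Ioc_self hr) (right_mem_Ioc.mpr hab) hr.2.le

theorem neck_radius_bound_general (n : ℕ) (hn : 3 ≤ n) (ε : ℝ) (hε : ε ∈ Set.Ico (0 : ℝ) 1)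
    (R : ℝ) (hR : 0 < R) (V V' : ℝ → ℝ)
    (hderiv : ∀ r ∈ Set.Ioc (0 : ℝ) R, HasDerivWithinAt V (V' r) (Set.Ioc (0 : ℝ) R) r)
    (hVR : V R = 0)
    (hscal : ∀ r ∈ Set.Ioc (0 : ℝ) R,
      (n : ℝ) * (1 - ε) ^ 2 * r ^ 2 ≤ ((n : ℝ) - 2) * (1 - V r) - r * V' r)
    (hpole : Filter.Tendsto (fun r : ℝ => r ^ (n - 2) * (1 - V r))
      (nhdsWithin 0 (Set.Ioi 0)) (nhds 0)) :
    R ≤ 1 / (1 - ε) := by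
  obtain ⟨m, rfl⟩ : ∃ m, n = m + 2 := ⟨n - 2, by omega⟩
  have h1ε : 0 < 1 - ε := sub_pos.mpr hε.2
  have hmono : MonotoneOn (massExcess m ((1 - ε) ^ 2) V) (Ioc 0 R) :=
    monotoneOn_massExcess (convex_Ioc 0 R) (fun _ hr => hr.1) hderiv
      fun r hr => by simpa using hscal r hr
  have hGR : 0 ≤ massExcess m ((1 - ε) ^ 2) V R :=
    hmono.le_of_tendsto_nhdsGT hR (tendsto_massExcess_nhdsGT_zero (by simpa using hpole))
  have hsq : ((1 - ε) * R) ^ 2 ≤ 1 := by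
    have hRm : 0 < R ^ m := pow_pos hR m
    simp only [massExcess, hVR, sub_zero, mul_one, pow_add] at hGR
    nlinarith
  rw [le_div_iff₀ h1ε, mul_comm]
  exact (pow_le_one_iff_of_nonneg (mul_pos h1ε hR).le two_ne_zero).1 hsq

/-- Bound on the radius of the minimal neck: in radial coordinates
`g = dr²/V(r) + r² g_round`, near-extremal scalar curvature, a smooth pole at `r = 0`,
and the minimal neck condition `V(R) = 0` force `R ≤ 1/(1-ε)`. -/
theorem neck_radius_bound (n : ℕ) (hn : 3 ≤ n) (ε : ℝ) (hε : ε ∈ Set.Ico (0 : ℝ) 1)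
    (R : ℝ) (hR : 0 < R) (V V' : ℝ → ℝ)
    (hderiv : ∀ r ∈ Set.Ioc (0 : ℝ) R, HasDerivWithinAt V (V' r) (Set.Ioc (0 : ℝ) R) r)
    (hVnonneg : ∀ r ∈ Set.Ioc (0 : ℝ) R, 0 ≤ V r)
    (hVR : V R = 0)
    (hscal : ∀ r ∈ Set.Ioc (0 : ℝ) R,
      (n : ℝ) * (1 - ε) ^ 2 * r ^ 2 ≤ ((n : ℝ) - 2) * (1 - V r) - r * V' r)
    (hpole : Filter.Tendsto (fun r : ℝ => r ^ (n - 2) * (1 - V r))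
      (nhdsWithin 0 (Set.Ioi 0)) (nhds 0)) :
    R ≤ 1 / (1 - ε) :=
  neck_radius_bound_general n hn ε hε R hR V V' hderiv hVR hscal hpole
end

section
/- Let n ≥ 3 be an integer, ε ∈ [0,1), s₀ > 0, and let f : [0,s₀] → ℝ be twice continuously differentiable with f(0) = 0, f(s) > 0 for all s ∈ (0,s₀], f'(s) ≥ 0 for all s ∈ [0,s₀], and f'(s₀) = 0. If for every s ∈ (0,s₀) one has (n−2)(1−f'(s)²) − 2 f(s) f''(s) ≥ n(1−ε)² f(s)², then f(s₀) ≤ 1/(1−ε). -/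
/-- Upper bound for the radius of the minimal leaf in warping-function coordinates:
`Scal ≥ n(n-1)(1-ε)²` together with `f` increasing up to the minimal leaf (`f'(s₀) = 0`)
forces `f(s₀) ≤ 1/(1-ε)`. -/
theorem minimal_leaf_radius_bound (n : ℕ) (hn : 3 ≤ n) (ε : ℝ) (hε : ε ∈ Set.Ico (0 : ℝ) 1)
    (s₀ : ℝ) (hs₀ : 0 < s₀) (f f' f'' : ℝ → ℝ)
    (hderiv1 : ∀ s ∈ Set.Icc (0 : ℝ) s₀, HasDerivWithinAt f (f' s) (Set.Icc (0 : ℝ) s₀) s)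
    (hderiv2 : ∀ s ∈ Set.Icc (0 : ℝ) s₀, HasDerivWithinAt f' (f'' s) (Set.Icc (0 : ℝ) s₀) s)
    (hcont : ContinuousOn f'' (Set.Icc (0 : ℝ) s₀))
    (hf0 : f 0 = 0)
    (hpos : ∀ s ∈ Set.Ioc (0 : ℝ) s₀, 0 < f s)
    (hmono : ∀ s ∈ Set.Icc (0 : ℝ) s₀, 0 ≤ f' s)
    (hf's₀ : f' s₀ = 0)
    (hscal : ∀ s ∈ Set.Ioo (0 : ℝ) s₀,
      (n : ℝ) * (1 - ε) ^ 2 * (f s) ^ 2 ≤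
        ((n : ℝ) - 2) * (1 - (f' s) ^ 2) - 2 * f s * f'' s) :
    f s₀ ≤ 1 / (1 - ε) := by
  obtain ⟨k, rfl⟩ := Nat.exists_eq_add_of_le hn
  have hε1 : (0:ℝ) < 1 - ε := by linarith [hε.2]
  -- the monotone quantity
  set G : ℝ → ℝ := fun s => f s ^ (k+1) * (1 - f' s ^ 2) - (1-ε)^2 * f s ^ (k+3) with hG
  set G' : ℝ → ℝ := fun s =>
    f s ^ k * f' s * (((k:ℝ)+1) * (1 - f' s ^ 2) - 2 * f s * f'' s
      - ((k:ℝ)+3) * (1-ε)^2 * f s ^ 2) with hG'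
  have hGderiv : ∀ s ∈ Set.Icc (0:ℝ) s₀,
      HasDerivWithinAt G (G' s) (Set.Icc (0:ℝ) s₀) s := by
    intro s hs
    have h1 := (hderiv1 s hs).pow (k+1)
    have h2 := (hderiv2 s hs).pow 2
    have h3 := ((hasDerivWithinAt_const s (Set.Icc (0:ℝ) s₀) (1:ℝ)).sub h2)
    have h4 := (h1.mul h3).sub
      (((hderiv1 s hs).pow (k+3)).const_mul ((1-ε)^2))
    convert h4 using 1
    on_goal 1 => rfl
    on_goal 1 => rfl
    on_goal 1 => rfl
    simp only [hG', Nat.add_sub_cancel, Nat.cast_add, Nat.cast_ofNat, Nat.cast_one,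
      pow_one, Pi.sub_apply, Pi.pow_apply]
    push_cast
    ring
  have hGcont : ContinuousOn G (Set.Icc (0:ℝ) s₀) := by
    have hfc : ContinuousOn f (Set.Icc (0:ℝ) s₀) := fun s hs =>
      (hderiv1 s hs).continuousWithinAt
    have hf'c : ContinuousOn f' (Set.Icc (0:ℝ) s₀) := fun s hs =>
      (hderiv2 s hs).continuousWithinAt
    fun_prop
  have hmonoG : MonotoneOn G (Set.Icc (0:ℝ) s₀) := by
    apply monotoneOn_of_hasDerivWithinAt_nonneg (convex_Icc _ _) hGcont
    · intro x hx
      rw [interior_Icc] at hx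
      exact (hGderiv x (Set.mem_Icc_of_Ioo hx)).mono
        (by rw [interior_Icc]; exact Set.Ioo_subset_Icc_self)
    · intro x hx
      rw [interior_Icc] at hx
      have hfx : 0 < f x := hpos x ⟨hx.1, le_of_lt hx.2⟩
      have hf'x : 0 ≤ f' x := hmono x (Set.mem_Icc_of_Ioo hx)
      have hsc := hscal x hx
      have hbr : 0 ≤ ((k:ℝ)+1) * (1 - f' x ^ 2) - 2 * f x * f'' x
          - ((k:ℝ)+3) * (1-ε)^2 * f x ^ 2 := by
        push_cast at hsc
        nlinarith [hsc]
      have : 0 ≤ f x ^ k := le_of_lt (pow_pos hfx k)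
      simp only [hG']
      positivity
  have key : G 0 ≤ G s₀ :=
    hmonoG (Set.left_mem_Icc.2 hs₀.le) (Set.right_mem_Icc.2 hs₀.le) hs₀.le
  have hfs₀ : 0 < f s₀ := hpos s₀ ⟨hs₀, le_refl _⟩
  simp only [hG, hf0, hf's₀, zero_pow (Nat.succ_ne_zero k),
    zero_pow (Nat.succ_ne_zero (k+2)), ne_eq, OfNat.ofNat_ne_zero, not_false_eq_true,
    zero_pow] at key
  norm_num at key
  have key2 : 0 ≤ f s₀ ^ (k+1) * (1 - (1-ε)^2 * f s₀ ^ 2) := by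
    have : f s₀ ^ (k+3) = f s₀ ^ (k+1) * f s₀ ^ 2 := by ring
    nlinarith [key]
  have hpow : 0 < f s₀ ^ (k+1) := pow_pos hfs₀ _
  have h5 : (1-ε)^2 * f s₀ ^ 2 ≤ 1 := by nlinarith [key2, hpow]
  rw [le_div_iff₀ hε1]
  nlinarith [hfs₀, hε1]
end

section
/- Let n ≥ 3 be an integer, ε ∈ [0,1), and R > 0. Let V : (0,R] → ℝ be differentiable and suppose that for every r ∈ (0,R] one has (n−2)(1−V(r)) − r·V'(r) ≥ n(1−ε)² r², and that r^{n−2}(1−V(r)) → 0 as r → 0⁺. Then for every r ∈ (0,R]: V(r) ≤ 1 − (1−ε)² r². -/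
/-- Fundamental metric estimate (I), upper bound: near-extremal scalar curvature in
radial coordinates forces `V(r) ≤ 1 - (1-ε)² r²`, the round-sphere profile up to ε. -/
theorem metric_estimate_upper (n : ℕ) (hn : 3 ≤ n) (ε : ℝ) (hε : ε ∈ Set.Ico (0 : ℝ) 1)
    (R : ℝ) (hR : 0 < R) (V V' : ℝ → ℝ)
    (hderiv : ∀ r ∈ Set.Ioc (0 : ℝ) R, HasDerivWithinAt V (V' r) (Set.Ioc (0 : ℝ) R) r)
    (hscal : ∀ r ∈ Set.Ioc (0 : ℝ) R,
      (n : ℝ) * (1 - ε) ^ 2 * r ^ 2 ≤ ((n : ℝ) - 2) * (1 - V r) - r * V' r)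
    (hpole : Filter.Tendsto (fun r : ℝ => r ^ (n - 2) * (1 - V r))
      (nhdsWithin 0 (Set.Ioi 0)) (nhds 0)) :
    ∀ r ∈ Set.Ioc (0 : ℝ) R, V r ≤ 1 - (1 - ε) ^ 2 * r ^ 2 := by
  have hcast : ((n - 2 : ℕ) : ℝ) = (n : ℝ) - 2 := by
    have h2 : (2 : ℕ) ≤ n := by omega
    push_cast [Nat.cast_sub h2]; ring
  set g : ℝ → ℝ := fun r => r ^ (n - 2) * (1 - V r) - (1 - ε) ^ 2 * r ^ n with hg
  have hVcont : ContinuousOn V (Set.Ioc 0 R) := fun x hx => (hderiv x hx).continuousWithinAt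
  have hgcont : ContinuousOn g (Set.Ioc 0 R) :=
    ((continuousOn_pow _).mul (continuousOn_const.sub hVcont)).sub
      (continuousOn_const.mul (continuousOn_pow _))
  have hgderiv : ∀ x ∈ Set.Ioo (0:ℝ) R, HasDerivAt g
      (x ^ (n-3) * ((((n:ℝ)-2) * (1 - V x) - x * V' x) - (n:ℝ) * (1-ε)^2 * x^2)) x := by
    intro x hx
    have hxmem : x ∈ Set.Ioc (0:ℝ) R := Set.Ioo_subset_Ioc_self hx
    have hnhds : Set.Ioc (0:ℝ) R ∈ nhds x :=
      mem_nhds_iff.mpr ⟨Set.Ioo 0 R, Set.Ioo_subset_Ioc_self, isOpen_Ioo, hx⟩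
    have hV : HasDerivAt V (V' x) x := (hderiv x hxmem).hasDerivAt hnhds
    have e32 : n - 2 - 1 = n - 3 := by omega
    have h1 : HasDerivAt (fun r : ℝ => r ^ (n-2) * (1 - V r))
        (((n-2:ℕ):ℝ) * x ^ (n-3) * (1 - V x) + x ^ (n-2) * (0 - V' x)) x := by
      have := (hasDerivAt_pow (n-2) x).mul ((hasDerivAt_const x (1:ℝ)).sub hV)
      rwa [e32] at this
    have h2 : HasDerivAt (fun r : ℝ => (1-ε)^2 * r ^ n)
        ((1-ε)^2 * ((n:ℕ) * x ^ (n-1))) x := (hasDerivAt_pow n x).const_mul _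
    have h := h1.sub h2
    have e1 : x ^ (n-2) = x ^ (n-3) * x := by rw [← pow_succ]; congr 1; omega
    have e2 : x ^ (n-1) = x ^ (n-3) * x ^ 2 := by rw [← pow_add]; congr 1; omega
    refine h.congr_deriv ?_
    rw [hcast, e1, e2]; ring
  have hmono : MonotoneOn g (Set.Ioc 0 R) := by
    apply monotoneOn_of_deriv_nonneg (convex_Ioc 0 R) hgcont
    · rw [interior_Ioc]
      exact fun x hx => (hgderiv x hx).differentiableAt.differentiableWithinAt
    · rw [interior_Ioc]
      intro x hx
      rw [(hgderiv x hx).deriv]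
      have hs := hscal x (Set.Ioo_subset_Ioc_self hx)
      have hb : 0 ≤ (((n:ℝ)-2) * (1 - V x) - x * V' x) - (n:ℝ) * (1-ε)^2 * x^2 := by
        linarith
      exact mul_nonneg (pow_nonneg hx.1.le _) hb
  have hg0 : Filter.Tendsto g (nhdsWithin 0 (Set.Ioi 0)) (nhds 0) := by
    have h2 : Filter.Tendsto (fun r : ℝ => (1-ε)^2 * r ^ n)
        (nhdsWithin 0 (Set.Ioi 0)) (nhds 0) := by
      have hc : Filter.Tendsto (fun r : ℝ => (1-ε)^2 * r ^ n) (nhds 0)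
          (nhds ((1-ε)^2 * (0:ℝ) ^ n)) :=
        (continuous_const.mul (continuous_pow n)).tendsto 0
      have hz : ((0:ℝ) ^ n) = 0 := zero_pow (by omega)
      simpa [hz] using hc.mono_left nhdsWithin_le_nhds
    simpa using hpole.sub h2
  intro r hr
  have hkey : (0:ℝ) ≤ g r := by
    have hev : ∀ᶠ s in nhdsWithin 0 (Set.Ioi 0), g s ≤ g r := by
      filter_upwards [Ioc_mem_nhdsGT_of_mem ⟨le_refl (0:ℝ), hr.1⟩] with s hs
      exact hmono ⟨hs.1, hs.2.trans hr.2⟩ hr hs.2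
    exact le_of_tendsto hg0 hev
  have e3 : r ^ n = r ^ (n-2) * r ^ 2 := by rw [← pow_add]; congr 1; omega
  have hp : 0 < r ^ (n-2) := pow_pos hr.1 _
  have hkey' : 0 ≤ r ^ (n-2) * ((1 - V r) - (1-ε)^2 * r^2) := by
    have : g r = r ^ (n-2) * ((1 - V r) - (1-ε)^2 * r^2) := by
      rw [hg]; simp only []; rw [e3]; ring
    linarith [hkey, this ▸ hkey]
  nlinarith [hp, hkey']
end

section
/- Let n ≥ 3 be an integer, ε ∈ [0,1), and R > 0. Let V : (0,R] → ℝ be differentiable with V(R) = 0, and suppose that for every r ∈ (0,R] one has (n−2)(1−V(r)) − r·V'(r) ≥ n(1−ε)² r². Then for every r ∈ (0,R]: V(r) ≥ 1 − (1−ε)² r² − (R^{n−2} − (1−ε)² R^n)/r^{n−2}. -/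
/-- Fundamental metric estimate (I), lower bound: near-extremal scalar curvature
together with the minimal neck condition `V(R) = 0` forces
`V(r) ≥ 1 - (1-ε)² r² - (R^{n-2} - (1-ε)² R^n)/r^{n-2}`. -/
theorem metric_estimate_lower (n : ℕ) (hn : 3 ≤ n) (ε : ℝ) (hε : ε ∈ Set.Ico (0 : ℝ) 1)
    (R : ℝ) (hR : 0 < R) (V V' : ℝ → ℝ)
    (hderiv : ∀ r ∈ Set.Ioc (0 : ℝ) R, HasDerivWithinAt V (V' r) (Set.Ioc (0 : ℝ) R) r)
    (hVR : V R = 0)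
    (hscal : ∀ r ∈ Set.Ioc (0 : ℝ) R,
      (n : ℝ) * (1 - ε) ^ 2 * r ^ 2 ≤ ((n : ℝ) - 2) * (1 - V r) - r * V' r) :
    ∀ r ∈ Set.Ioc (0 : ℝ) R,
      1 - (1 - ε) ^ 2 * r ^ 2 - (R ^ (n - 2) - (1 - ε) ^ 2 * R ^ n) / r ^ (n - 2) ≤ V r := by
  set c : ℝ := (1 - ε) ^ 2 with hc
  set W : ℝ → ℝ := fun r => r ^ (n - 2) * (1 - V r) - c * r ^ n with hW
  set g : ℝ → ℝ := fun r =>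
    ((n : ℝ) - 2) * r ^ (n - 3) * (1 - V r) - r ^ (n - 2) * V' r - (n : ℝ) * c * r ^ (n - 1)
    with hg
  have hWd : ∀ r ∈ Set.Ioc (0 : ℝ) R, HasDerivWithinAt W (g r) (Set.Ioc (0 : ℝ) R) r := by
    intro r hr
    have h1 : HasDerivWithinAt (fun x : ℝ => x ^ (n - 2) * (1 - V x))
        (((n - 2 : ℕ) : ℝ) * r ^ (n - 2 - 1) * (1 - V r) + r ^ (n - 2) * (0 - V' r))
        (Set.Ioc (0 : ℝ) R) r :=
      ((hasDerivAt_pow (n - 2) r).hasDerivWithinAt).mul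
        ((hasDerivWithinAt_const r _ 1).sub (hderiv r hr))
    have h2 : HasDerivWithinAt (fun x : ℝ => c * x ^ n)
        (c * (((n : ℕ) : ℝ) * r ^ (n - 1))) (Set.Ioc (0 : ℝ) R) r :=
      ((hasDerivAt_pow n r).hasDerivWithinAt).const_mul c
    have := h1.sub h2
    convert this using 1
    case e'_4 => rfl
    case e'_5 => rfl
    case e'_8 => rfl
    have h3 : n - 2 - 1 = n - 3 := by omega
    have h4 : ((n - 2 : ℕ) : ℝ) = (n : ℝ) - 2 := by
      have : (2 : ℕ) ≤ n := by omega
      push_cast [this]; ring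
    rw [hg, h3, h4]; ring
  have hmono : MonotoneOn W (Set.Ioc (0 : ℝ) R) := by
    apply monotoneOn_of_deriv_nonneg (convex_Ioc 0 R)
    · intro r hr
      exact (hWd r hr).continuousWithinAt
    · intro r hr
      rw [interior_Ioc] at hr
      exact ((hWd r ⟨hr.1, hr.2.le⟩).hasDerivAt
        (Ioc_mem_nhds hr.1 hr.2)).differentiableAt.differentiableWithinAt
    · intro r hr
      rw [interior_Ioc] at hr
      have hd := ((hWd r ⟨hr.1, hr.2.le⟩).hasDerivAt (Ioc_mem_nhds hr.1 hr.2)).deriv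
      rw [hd, hg]
      have hs := hscal r ⟨hr.1, hr.2.le⟩
      have hrp : (0 : ℝ) < r := hr.1
      have hmul := mul_le_mul_of_nonneg_left hs (pow_nonneg hrp.le (n - 3))
      have e1 : r ^ (n - 3) * r ^ 2 = r ^ (n - 1) := by
        rw [← pow_add]; congr 1; omega
      have e2 : r ^ (n - 3) * r = r ^ (n - 2) := by
        rw [← pow_succ]; congr 1; omega
      show (0 : ℝ) ≤
        ((n : ℝ) - 2) * r ^ (n - 3) * (1 - V r) - r ^ (n - 2) * V' r - (n : ℝ) * c * r ^ (n - 1)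
      rw [show r ^ (n - 2) = r ^ (n - 3) * r from e2.symm,
        show r ^ (n - 1) = r ^ (n - 3) * r ^ 2 from e1.symm]
      nlinarith [hmul]
  intro r hr
  have hRmem : R ∈ Set.Ioc (0 : ℝ) R := ⟨hR, le_refl R⟩
  have hWr := hmono hr hRmem hr.2
  have hWR : W R = R ^ (n - 2) - c * R ^ n := by simp [hW, hVR]
  have hrp : (0 : ℝ) < r := hr.1
  have hrn : (0 : ℝ) < r ^ (n - 2) := pow_pos hrp _
  have key : (1 - V r - c * r ^ 2) ≤ (R ^ (n - 2) - c * R ^ n) / r ^ (n - 2) := by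
    rw [le_div_iff₀ hrn]
    have e3 : r ^ n = r ^ (n - 2) * r ^ 2 := by
      rw [← pow_add]; congr 1; omega
    have : W r = (1 - V r - c * r ^ 2) * r ^ (n - 2) := by
      rw [hW]; simp only []; rw [e3]; ring
    rw [← this, ← hWR]; exact hWr
  linarith
end

section
/- Let n ≥ 3 be an integer, ε ∈ [0,1), b > 0, and let f : [0,b] → ℝ be twice continuously differentiable with f(0) = 0, f(s) > 0 for all s ∈ (0,b], and f'(s) ≥ 0 for all s ∈ [0,b]. If for every s ∈ (0,b) one has (n−2)(1−f'(s)²) − 2 f(s) f''(s) ≥ n(1−ε)² f(s)², then f'(s)² ≤ 1 − (1−ε)² f(s)² for every s ∈ [0,b]. -/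
/-- Warping-function form of the upper metric estimate: `Scal ≥ n(n-1)(1-ε)²` with `f`
increasing from the pole forces `f'(s)² ≤ 1 - (1-ε)² f(s)²`. -/
theorem warping_metric_estimate_upper (n : ℕ) (hn : 3 ≤ n) (ε : ℝ)
    (hε : ε ∈ Set.Ico (0 : ℝ) 1) (b : ℝ) (hb : 0 < b) (f f' f'' : ℝ → ℝ)
    (hderiv1 : ∀ s ∈ Set.Icc (0 : ℝ) b, HasDerivWithinAt f (f' s) (Set.Icc (0 : ℝ) b) s)
    (hderiv2 : ∀ s ∈ Set.Icc (0 : ℝ) b, HasDerivWithinAt f' (f'' s) (Set.Icc (0 : ℝ) b) s)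
    (hcont : ContinuousOn f'' (Set.Icc (0 : ℝ) b))
    (hf0 : f 0 = 0)
    (hpos : ∀ s ∈ Set.Ioc (0 : ℝ) b, 0 < f s)
    (hmono : ∀ s ∈ Set.Icc (0 : ℝ) b, 0 ≤ f' s)
    (hscal : ∀ s ∈ Set.Ioo (0 : ℝ) b,
      (n : ℝ) * (1 - ε) ^ 2 * (f s) ^ 2 ≤
        ((n : ℝ) - 2) * (1 - (f' s) ^ 2) - 2 * f s * f'' s) :
    ∀ s ∈ Set.Icc (0 : ℝ) b, (f' s) ^ 2 ≤ 1 - (1 - ε) ^ 2 * (f s) ^ 2 := by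
  obtain ⟨m, rfl⟩ : ∃ m, n = m + 3 := ⟨n - 3, by omega⟩
  set c : ℝ := (1 - ε) ^ 2 with hc
  set G : ℝ → ℝ := fun s => f s ^ (m + 1) * (1 - f' s ^ 2) - c * f s ^ (m + 3) with hG
  -- derivative of G at interior points
  have hGderiv : ∀ x ∈ Set.Ioo (0 : ℝ) b, HasDerivAt G
      (f x ^ m * f' x * ((m + 1 : ℝ) * (1 - f' x ^ 2) - 2 * f x * f'' x
        - c * (m + 3 : ℝ) * f x ^ 2)) x := by
    intro x hx
    have hxI : x ∈ Set.Icc (0 : ℝ) b := Set.Ioo_subset_Icc_self hx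
    have hnhds : Set.Icc (0 : ℝ) b ∈ nhds x := Icc_mem_nhds hx.1 hx.2
    have hf : HasDerivAt f (f' x) x := (hderiv1 x hxI).hasDerivAt hnhds
    have hf' : HasDerivAt f' (f'' x) x := (hderiv2 x hxI).hasDerivAt hnhds
    have h1 : HasDerivAt (fun s => f s ^ (m + 1) * (1 - f' s ^ 2))
        (((m + 1 : ℕ) : ℝ) * f x ^ m * f' x * (1 - f' x ^ 2)
          + f x ^ (m + 1) * (0 - ((2 : ℕ) : ℝ) * f' x ^ 1 * f'' x)) x := by
      have hp : HasDerivAt (fun s => f s ^ (m + 1))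
          (((m + 1 : ℕ) : ℝ) * f x ^ m * f' x) x := by
        simpa using hf.fun_pow (m + 1)
      have hq : HasDerivAt (fun s => 1 - f' s ^ 2)
          (0 - ((2 : ℕ) : ℝ) * f' x ^ 1 * f'' x) x :=
        (hasDerivAt_const x (1 : ℝ)).sub (hf'.pow 2)
      exact hp.mul hq
    have h2 : HasDerivAt (fun s => c * f s ^ (m + 3))
        (c * (((m + 3 : ℕ) : ℝ) * f x ^ (m + 2) * f' x)) x := by
      have : HasDerivAt (fun s => f s ^ (m + 3))
          (((m + 3 : ℕ) : ℝ) * f x ^ (m + 2) * f' x) x := by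
        simpa using hf.fun_pow (m + 3)
      exact this.const_mul c
    have h3 := h1.fun_sub h2
    refine h3.congr_deriv ?_
    push_cast
    rw [pow_succ, pow_succ, pow_succ]
    ring
  -- G is continuous on [0,b]
  have hfc : ContinuousOn f (Set.Icc (0 : ℝ) b) :=
    fun x hx => (hderiv1 x hx).continuousWithinAt
  have hf'c : ContinuousOn f' (Set.Icc (0 : ℝ) b) :=
    fun x hx => (hderiv2 x hx).continuousWithinAt
  have hGc : ContinuousOn G (Set.Icc (0 : ℝ) b) := by
    apply ContinuousOn.sub
    · exact (hfc.pow _).mul (continuousOn_const.sub (hf'c.pow 2))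
    · exact continuousOn_const.mul (hfc.pow _)
  -- G is monotone
  have hGmono : MonotoneOn G (Set.Icc (0 : ℝ) b) := by
    apply monotoneOn_of_deriv_nonneg (convex_Icc 0 b) hGc
    · intro x hx
      rw [interior_Icc] at hx
      exact ((hGderiv x hx).differentiableAt.differentiableWithinAt)
    · intro x hx
      rw [interior_Icc] at hx
      rw [(hGderiv x hx).deriv]
      have hxI : x ∈ Set.Icc (0 : ℝ) b := Set.Ioo_subset_Icc_self hx
      have hfx : 0 < f x := hpos x ⟨hx.1, hx.2.le⟩
      have hf'x : 0 ≤ f' x := hmono x hxI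
      have hs := hscal x hx
      have hbr : 0 ≤ (m + 1 : ℝ) * (1 - f' x ^ 2) - 2 * f x * f'' x
          - c * (m + 3 : ℝ) * f x ^ 2 := by
        push_cast at hs
        nlinarith [hs]
      exact mul_nonneg (mul_nonneg (pow_nonneg hfx.le m) hf'x) hbr
  -- G 0 = 0, hence G ≥ 0 on [0,b]
  have hG0 : G 0 = 0 := by simp [hG, hf0]
  have hGnonneg : ∀ s ∈ Set.Icc (0 : ℝ) b, 0 ≤ G s := by
    intro s hs
    have := hGmono (Set.left_mem_Icc.mpr hb.le) hs hs.1
    rw [hG0] at this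
    exact this
  -- conclusion on (0,b]
  have hIoc : ∀ s ∈ Set.Ioc (0 : ℝ) b, f' s ^ 2 ≤ 1 - c * f s ^ 2 := by
    intro s hs
    have hfs : 0 < f s := hpos s hs
    have hGs := hGnonneg s ⟨hs.1.le, hs.2⟩
    have hpow : 0 < f s ^ (m + 1) := pow_pos hfs _
    have key : 0 ≤ f s ^ (m + 1) * (1 - f' s ^ 2 - c * f s ^ 2) := by
      have : f s ^ (m + 3) = f s ^ (m + 1) * f s ^ 2 := by ring
      simp only [hG] at hGs
      nlinarith [hGs]
    nlinarith [key, hpow]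
  -- conclusion at 0 by continuity
  intro s hs
  rcases eq_or_lt_of_le hs.1 with h0 | h0
  · subst h0
    have hcontφ : ContinuousWithinAt (fun s => 1 - c * f s ^ 2 - f' s ^ 2)
        (Set.Ioc (0 : ℝ) b) 0 := by
      have : ContinuousWithinAt (fun s => 1 - c * f s ^ 2 - f' s ^ 2)
          (Set.Icc (0 : ℝ) b) 0 := by
        apply ContinuousWithinAt.sub
        · exact (continuousWithinAt_const.sub
            (continuousWithinAt_const.mul ((hfc 0 ⟨le_refl 0, hb.le⟩).pow 2)))
        · exact (hf'c 0 ⟨le_refl 0, hb.le⟩).pow 2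
      exact this.mono Set.Ioc_subset_Icc_self
    have hne : (nhdsWithin (0 : ℝ) (Set.Ioc 0 b)).NeBot := by
      rw [← mem_closure_iff_nhdsWithin_neBot, closure_Ioc hb.ne]
      exact ⟨le_refl 0, hb.le⟩
    have hlim : Filter.Tendsto (fun s => 1 - c * f s ^ 2 - f' s ^ 2)
        (nhdsWithin (0 : ℝ) (Set.Ioc 0 b)) (nhds (1 - c * f 0 ^ 2 - f' 0 ^ 2)) := hcontφ
    have hnn : 0 ≤ 1 - c * f 0 ^ 2 - f' 0 ^ 2 := by
      refine ge_of_tendsto hlim ?_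
      filter_upwards [self_mem_nhdsWithin] with x hx
      have := hIoc x hx
      linarith
    linarith
  · have := hIoc s ⟨h0, hs.2⟩
    linarith
end
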